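/- arXiv:1606.09496 — 6 statements merged into one kernel-verified Lean document; each statement's English description precedes it below -/
import Mathlib

section
/- Saalschütz's theorem in binomial form: for complex numbers $x,y,z$ and a positive integer $n$ (with all denominators nonzero), $\sum_{k=0}^n(-1)^k\binom{n}{k}\frac{\binom{z+k}{k}\binom{y+k}{k}}{\binom{x+k}{k}\binom{y+z-x-n+k}{k}}\frac{y}{y+k}=\frac{\binom{x-y+n}{n}\binom{x-z-1+n}{n}}{\binom{x+n}{n}\binom{x-y-z-1+n}{n}}$. -/
open Finset

noncomputable def gbinom (w : ℂ) (k : ℕ) : ℂ :=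
  (∏ i ∈ Finset.range k, (w - i)) / (Nat.factorial k)

noncomputable def genH (l : ℕ) (x : ℂ) (n : ℕ) : ℂ :=
  ∑ i ∈ Finset.range n, 1 / (x + (i + 1)) ^ l

noncomputable def PP (w : ℂ) (m : ℕ) : ℂ := ∏ i ∈ Finset.range m, (w + i)

lemma PP_zero (w : ℂ) : PP w 0 = 1 := by simp [PP]

lemma PP_succ (w : ℂ) (m : ℕ) : PP w (m + 1) = PP w m * (w + m) :=
  Finset.prod_range_succ _ _

lemma PP_add (w : ℂ) (j m : ℕ) : PP w (j + m) = PP w j * PP (w + j) m := by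
  induction m with
  | zero => simp [PP]
  | succ m ih =>
    rw [show j + (m + 1) = (j + m) + 1 from rfl, PP_succ, ih, PP_succ]
    push_cast
    ring

lemma PP_reflect (w : ℂ) (m : ℕ) : PP w m = (-1) ^ m * PP (1 - w - m) m := by
  have h1 : PP (1 - w - m) m = ∏ i ∈ Finset.range m, (-w - ((m - 1 - i : ℕ) : ℂ)) := by
    refine Finset.prod_congr rfl fun i hi => ?_
    have hi' : i < m := Finset.mem_range.mp hi
    have hc : ((m - 1 - i : ℕ) : ℂ) = (m : ℂ) - 1 - i := by
      have h : m - 1 - i = m - (1 + i) := by omega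
      rw [h, Nat.cast_sub (by omega)]
      push_cast; ring
    rw [hc]; ring
  have h2 : (∏ i ∈ Finset.range m, (fun j : ℕ => -w - (j : ℂ)) (m - 1 - i)) =
      ∏ i ∈ Finset.range m, (-w - (i : ℂ)) := Finset.prod_range_reflect (fun j : ℕ => -w - (j : ℂ)) m
  have h3 : (∏ i ∈ Finset.range m, (-w - (i : ℂ))) = (-1) ^ m * PP w m := by
    calc (∏ i ∈ Finset.range m, (-w - (i : ℂ)))
        = ∏ i ∈ Finset.range m, ((-1) * (w + (i : ℂ))) :=
          Finset.prod_congr rfl (by intros; ring)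
      _ = (-1) ^ m * PP w m := by
          rw [Finset.prod_mul_distrib, Finset.prod_const, Finset.card_range, PP]
  rw [h1.trans (h2.trans h3), ← mul_assoc, ← mul_pow]
  norm_num

lemma vdm : ∀ (n : ℕ) (A B : ℂ),
    ∑ j ∈ Finset.range (n + 1), (n.choose j : ℂ) * PP A j * PP B (n - j) = PP (A + B) n := by
  intro n
  induction n with
  | zero => intro A B; simp [PP]
  | succ n ih =>
    intro A B
    rw [Finset.sum_range_succ']
    have hstep : ∀ j ∈ Finset.range (n + 1),
        ((n + 1).choose (j + 1) : ℂ) * PP A (j + 1) * PP B (n + 1 - (j + 1)) =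
          (n.choose j : ℂ) * PP A (j + 1) * PP B (n - j) +
            (n.choose (j + 1) : ℂ) * PP A (j + 1) * PP B (n - j) := by
      intro j hj
      rw [Nat.choose_succ_succ, show n + 1 - (j + 1) = n - j by omega]
      push_cast; ring
    rw [Finset.sum_congr rfl hstep, Finset.sum_add_distrib, add_assoc]
    have hg : (∑ j ∈ Finset.range (n + 1),
          (n.choose (j + 1) : ℂ) * PP A (j + 1) * PP B (n - j)) +
          ((n + 1).choose 0 : ℂ) * PP A 0 * PP B (n + 1 - 0) =
        ∑ j ∈ Finset.range (n + 1), (n.choose j : ℂ) * PP A j * PP B (n + 1 - j) := by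
      have e0 : ∀ j ∈ Finset.range (n + 1),
          (n.choose (j + 1) : ℂ) * PP A (j + 1) * PP B (n - j) =
            (fun j => (n.choose j : ℂ) * PP A j * PP B (n + 1 - j)) (j + 1) := by
        intro j _
        simp only
        rw [show n + 1 - (j + 1) = n - j by omega]
      rw [Finset.sum_congr rfl e0,
        show ((n + 1).choose 0 : ℂ) * PP A 0 * PP B (n + 1 - 0) =
          (fun j => (n.choose j : ℂ) * PP A j * PP B (n + 1 - j)) 0 by simp,
        ← Finset.sum_range_succ' (fun j => (n.choose j : ℂ) * PP A j * PP B (n + 1 - j)) (n + 1),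
        Finset.sum_range_succ]
      simp
    rw [hg]
    have key : (∑ j ∈ Finset.range (n + 1), (n.choose j : ℂ) * PP A (j + 1) * PP B (n - j)) +
        ∑ j ∈ Finset.range (n + 1), (n.choose j : ℂ) * PP A j * PP B (n + 1 - j) =
        (∑ j ∈ Finset.range (n + 1), (n.choose j : ℂ) * PP A j * PP B (n - j)) *
          (A + B + n) := by
      rw [← Finset.sum_add_distrib, Finset.sum_mul]
      refine Finset.sum_congr rfl fun j hj => ?_
      have hjn : j ≤ n := by have := Finset.mem_range.mp hj; omega
      have h2 : n + 1 - j = (n - j) + 1 := by omega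
      have hc : ((n - j : ℕ) : ℂ) = (n : ℂ) - j := by rw [Nat.cast_sub hjn]
      rw [h2, PP_succ, PP_succ, hc]
      ring
    rw [key, ih, PP_succ]

lemma stepA (n : ℕ) (b c : ℂ) :
    ∑ j ∈ Finset.range (n + 1), (-1 : ℂ) ^ j * (n.choose j : ℂ) * PP (c - b) j *
      PP (c + j) (n - j) = PP b n := by
  have h := vdm n (c - b) (1 - c - n)
  calc ∑ j ∈ Finset.range (n + 1), (-1 : ℂ) ^ j * (n.choose j : ℂ) * PP (c - b) j *
        PP (c + j) (n - j)
      = ∑ j ∈ Finset.range (n + 1), (-1 : ℂ) ^ n *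
          ((n.choose j : ℂ) * PP (c - b) j * PP (1 - c - n) (n - j)) := by
        refine Finset.sum_congr rfl fun j hj => ?_
        have hjn : j ≤ n := by have := Finset.mem_range.mp hj; omega
        have hc : ((n - j : ℕ) : ℂ) = (n : ℂ) - j := by rw [Nat.cast_sub hjn]
        have hrefl := PP_reflect (c + j) (n - j)
        rw [show (1 - (c + (j : ℂ)) - ((n - j : ℕ) : ℂ)) = 1 - c - n by rw [hc]; ring] at hrefl
        rw [hrefl]
        have hpow : (-1 : ℂ) ^ j * (-1 : ℂ) ^ (n - j) = (-1 : ℂ) ^ n := by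
          rw [← pow_add]; congr 1; omega
        linear_combination ((n.choose j : ℂ) * PP (c - b) j * PP (1 - c - n) (n - j)) * hpow
    _ = (-1 : ℂ) ^ n * PP (c - b + (1 - c - n)) n := by rw [← Finset.mul_sum, h]
    _ = PP b n := by
        rw [show c - b + (1 - c - (n : ℂ)) = 1 - b - n by ring, PP_reflect b n]

lemma star (n : ℕ) (a b c : ℂ) :
    ∑ k ∈ Finset.range (n + 1), (n.choose k : ℂ) * PP a k * PP b k *
      PP (c + k) (n - k) * PP (c - a - b) (n - k) = PP (c - a) n * PP (c - b) n := by
  have h1 : ∀ k ∈ Finset.range (n + 1),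
      (n.choose k : ℂ) * PP a k * PP b k * PP (c + k) (n - k) * PP (c - a - b) (n - k) =
      ∑ j ∈ Finset.range (k + 1),
        (n.choose k : ℂ) * PP a k * ((-1 : ℂ) ^ j * (k.choose j : ℂ) * PP (c - b) j *
          PP (c + j) (k - j)) * PP (c + k) (n - k) * PP (c - a - b) (n - k) := by
    intro k _
    rw [← stepA k b c, Finset.mul_sum, Finset.sum_mul, Finset.sum_mul]
  rw [Finset.sum_congr rfl h1]
  have hcomm : ∀ k j : ℕ, k ∈ Finset.range (n + 1) ∧ j ∈ Finset.range (k + 1) ↔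
      k ∈ Finset.Ico j (n + 1) ∧ j ∈ Finset.range (n + 1) := by
    intro k j
    simp only [Finset.mem_range, Finset.mem_Ico]
    omega
  rw [Finset.sum_comm' hcomm]
  calc ∑ j ∈ Finset.range (n + 1), ∑ k ∈ Finset.Ico j (n + 1),
        (n.choose k : ℂ) * PP a k * ((-1 : ℂ) ^ j * (k.choose j : ℂ) * PP (c - b) j *
          PP (c + j) (k - j)) * PP (c + k) (n - k) * PP (c - a - b) (n - k)
      = ∑ j ∈ Finset.range (n + 1),
          ((-1 : ℂ) ^ j * (n.choose j : ℂ) * PP a j * PP (c - b) j * PP (c + j) (n - j)) *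
            PP (c - b + j) (n - j) := by
        refine Finset.sum_congr rfl fun j hj => ?_
        have hjn : j ≤ n := by have := Finset.mem_range.mp hj; omega
        rw [Finset.sum_Ico_eq_sum_range, show n + 1 - j = (n - j) + 1 by omega]
        have h2 : ∀ m ∈ Finset.range ((n - j) + 1),
            (n.choose (j + m) : ℂ) * PP a (j + m) * ((-1 : ℂ) ^ j * ((j + m).choose j : ℂ) *
              PP (c - b) j * PP (c + j) ((j + m) - j)) * PP (c + ((j + m : ℕ) : ℂ)) (n - (j + m)) *
              PP (c - a - b) (n - (j + m)) =
            ((-1 : ℂ) ^ j * (n.choose j : ℂ) * PP a j * PP (c - b) j * PP (c + j) (n - j)) *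
              (((n - j).choose m : ℂ) * PP (a + j) m * PP (c - a - b) ((n - j) - m)) := by
          intro m hm
          have hmn : m ≤ n - j := by have := Finset.mem_range.mp hm; omega
          have hA : (j + m) - j = m := by omega
          have hB : n - (j + m) = (n - j) - m := by omega
          have hch : (n.choose (j + m) : ℂ) * ((j + m).choose j : ℂ) =
              (n.choose j : ℂ) * ((n - j).choose m : ℂ) := by
            have := Nat.choose_mul (n := n) (show j ≤ j + m by omega)
            rw [hA] at this
            exact_mod_cast congrArg (Nat.cast : ℕ → ℂ) this
          have hPa : PP a (j + m) = PP a j * PP (a + j) m := PP_add a j m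
          have hPc : PP (c + j) (n - j) =
              PP (c + j) m * PP (c + ((j + m : ℕ) : ℂ)) ((n - j) - m) := by
            have h3 := PP_add (c + j) m ((n - j) - m)
            rw [show m + ((n - j) - m) = n - j by omega] at h3
            rw [show (c + (j : ℂ)) + (m : ℂ) = c + ((j + m : ℕ) : ℂ) by push_cast; ring] at h3
            exact h3
          rw [hA, hB, hPa, hPc]
          linear_combination (PP a j * PP (a + j) m * ((-1 : ℂ) ^ j * PP (c - b) j *
            PP (c + j) m) * PP (c + ((j + m : ℕ) : ℂ)) ((n - j) - m) *
            PP (c - a - b) ((n - j) - m)) * hch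
        rw [Finset.sum_congr rfl h2, ← Finset.mul_sum]
        have hv := vdm (n - j) (a + j) (c - a - b)
        rw [show (a + (j : ℂ)) + (c - a - b) = c - b + j by ring] at hv
        rw [hv]
    _ = ∑ j ∈ Finset.range (n + 1),
          ((-1 : ℂ) ^ j * (n.choose j : ℂ) * PP a j * PP (c + j) (n - j)) * PP (c - b) n := by
        refine Finset.sum_congr rfl fun j hj => ?_
        have hjn : j ≤ n := by have := Finset.mem_range.mp hj; omega
        have h4 := PP_add (c - b) j (n - j)
        rw [show j + (n - j) = n by omega] at h4
        rw [h4]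
        ring
    _ = PP (c - a) n * PP (c - b) n := by
        rw [← Finset.sum_mul]
        congr 1
        have h5 := stepA n (c - a) c
        rw [show c - (c - a) = a by ring] at h5
        exact h5

lemma gbinom_eq (w : ℂ) (k : ℕ) : gbinom (w + k) k = PP (w + 1) k / (k.factorial : ℂ) := by
  unfold gbinom
  congr 1
  have h1 : ∀ i ∈ Finset.range k, w + (k : ℂ) - i = w + 1 + ((k - 1 - i : ℕ) : ℂ) := by
    intro i hi
    have hi' : i < k := Finset.mem_range.mp hi
    have : ((k - 1 - i : ℕ) : ℂ) = (k : ℂ) - 1 - i := by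
      have h : k - 1 - i = k - (1 + i) := by omega
      rw [h, Nat.cast_sub (by omega)]
      push_cast; ring
    rw [this]; ring
  rw [Finset.prod_congr rfl h1,
    Finset.prod_range_reflect (fun j : ℕ => w + 1 + (j : ℂ)) k]
  rfl

theorem stmt3 (x y z : ℂ) (n : ℕ) (hn : 0 < n)
    (h1 : ∀ k ≤ n, gbinom (x + k) k ≠ 0)
    (h2 : ∀ k ≤ n, gbinom (y + z - x - n + k) k ≠ 0)
    (h3 : ∀ k ≤ n, y + (k : ℂ) ≠ 0)
    (h4 : gbinom (x - y - z - 1 + n) n ≠ 0) :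
    ∑ k ∈ Finset.range (n + 1), (-1 : ℂ) ^ k * (n.choose k : ℂ) *
        (gbinom (z + k) k * gbinom (y + k) k /
          (gbinom (x + k) k * gbinom (y + z - x - n + k) k)) * (y / (y + k)) =
      gbinom (x - y + n) n * gbinom (x - z - 1 + n) n /
        (gbinom (x + n) n * gbinom (x - y - z - 1 + n) n) := by
  have hfac : ∀ m : ℕ, ((m.factorial : ℂ)) ≠ 0 :=
    fun m => Nat.cast_ne_zero.mpr (Nat.factorial_ne_zero m)
  have hx : ∀ k, k ≤ n → PP (x + 1) k ≠ 0 := by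
    intro k hk h0
    exact h1 k hk (by rw [gbinom_eq, h0, zero_div])
  have hw : ∀ k, k ≤ n → PP (y + z - x - n + 1) k ≠ 0 := by
    intro k hk h0
    exact h2 k hk (by rw [gbinom_eq, h0, zero_div])
  have hxyz : PP (x - y - z) n ≠ 0 := by
    intro h0
    apply h4
    rw [gbinom_eq, show x - y - z - 1 + 1 = x - y - z by ring, h0, zero_div]
  have hD : PP (x + 1) n * PP (y + z - x - n + 1) n ≠ 0 :=
    mul_ne_zero (hx n le_rfl) (hw n le_rfl)
  have hterm : ∀ k ∈ Finset.range (n + 1),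
      ((-1 : ℂ) ^ k * (n.choose k : ℂ) *
        (gbinom (z + k) k * gbinom (y + k) k /
          (gbinom (x + k) k * gbinom (y + z - x - n + k) k)) * (y / (y + k))) *
        (PP (x + 1) n * PP (y + z - x - n + 1) n) =
      (-1 : ℂ) ^ n * ((n.choose k : ℂ) * PP y k * PP (z + 1) k *
        PP (x + 1 + k) (n - k) * PP (x + 1 - y - (z + 1)) (n - k)) := by
    intro k hk
    have hkn : k ≤ n := by have := Finset.mem_range.mp hk; omega
    rw [gbinom_eq z k, gbinom_eq y k, gbinom_eq x k, gbinom_eq (y + z - x - n) k]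
    have e1 : PP (x + 1) n = PP (x + 1) k * PP (x + 1 + k) (n - k) := by
      have h := PP_add (x + 1) k (n - k)
      rw [show k + (n - k) = n by omega] at h
      exact h
    have e2 : PP (y + z - x - n + 1) n =
        PP (y + z - x - n + 1) k * PP (y + z - x - n + 1 + k) (n - k) := by
      have h := PP_add (y + z - x - n + 1) k (n - k)
      rw [show k + (n - k) = n by omega] at h
      exact h
    have e3 : PP (x + 1 - y - (z + 1)) (n - k) =
        (-1) ^ (n - k) * PP (y + z - x - n + 1 + k) (n - k) := by
      have h := PP_reflect (x + 1 - y - (z + 1)) (n - k)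
      rw [show 1 - (x + 1 - y - (z + 1)) - ((n - k : ℕ) : ℂ) = y + z - x - n + 1 + k by
        rw [Nat.cast_sub hkn]; ring] at h
      exact h
    have e4 : PP y k = y * PP (y + 1) k / (y + k) := by
      rw [eq_div_iff (h3 k hkn)]
      have ha := PP_add y 1 k
      rw [show 1 + k = k + 1 by omega, PP_succ] at ha
      have hb : PP y 1 = y := by
        rw [show (1 : ℕ) = 0 + 1 from rfl, PP_succ, PP_zero]
        push_cast; ring
      rw [hb] at ha
      push_cast at ha
      linear_combination ha
    have epow : (-1 : ℂ) ^ k * (-1 : ℂ) ^ (n - k) = (-1 : ℂ) ^ n := by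
      rw [← pow_add]; congr 1; omega
    rw [e1, e2, e3, e4, ← epow]
    field_simp [hx k hkn, hw k hkn, hfac k, h3 k hkn]
    have hsq : (-1 : ℂ) ^ (n - k) * (-1 : ℂ) ^ (n - k) = 1 := by
      rw [← mul_pow]; norm_num
    linear_combination (-((n.choose k : ℂ) * PP (z + 1) k * y * PP (y + 1) k *
      PP (x + 1 + k) (n - k) * PP (y + z - x - n + 1 + k) (n - k))) * hsq
  have hR : (gbinom (x - y + n) n * gbinom (x - z - 1 + n) n /
        (gbinom (x + n) n * gbinom (x - y - z - 1 + n) n)) *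
        (PP (x + 1) n * PP (y + z - x - n + 1) n) =
      (-1 : ℂ) ^ n * (PP (x + 1 - y) n * PP (x + 1 - (z + 1)) n) := by
    rw [gbinom_eq (x - y) n, gbinom_eq (x - z - 1) n, gbinom_eq x n,
      gbinom_eq (x - y - z - 1) n,
      show x - z - 1 + 1 = x + 1 - (z + 1) by ring,
      show x - y - z - 1 + 1 = x - y - z by ring,
      show x - y + 1 = x + 1 - y by ring]
    have hWn : PP (y + z - x - n + 1) n = (-1) ^ n * PP (x - y - z) n := by
      have h := PP_reflect (y + z - x - n + 1) n
      rw [show 1 - (y + z - x - n + 1) - (n : ℂ) = x - y - z by ring] at h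
      exact h
    rw [hWn]
    field_simp [hx n le_rfl, hxyz, hfac n]
  refine mul_right_cancel₀ hD ?_
  rw [Finset.sum_mul, Finset.sum_congr rfl hterm, ← Finset.mul_sum,
    star n y (z + 1) (x + 1), ← hR]
end

section
/- A contiguous Saalschütz identity: for complex numbers $a,b,c$ and a positive integer $n$ (with no vanishing denominators), $\sum_{k=0}^n\frac{(a)_k(b)_k(-n)_k}{k!\,(1+c)_k(1+a+b-c-n)_k}=\Big(1+\frac{n(c-a-b)}{(c-a)(c-b)}\Big)\frac{(c-a)_n(c-b)_n}{(1+c)_n(c-a-b)_n}$. -/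
open Finset

noncomputable def poch (a : ℂ) (k : ℕ) : ℂ := ∏ i ∈ Finset.range k, (a + i)

lemma poch_zero (a : ℂ) : poch a 0 = 1 := by simp [poch]
lemma poch_one (a : ℂ) : poch a 1 = a := by simp [poch]
lemma poch_succ (a : ℂ) (k : ℕ) : poch a (k+1) = poch a k * (a + k) := by
  simp [poch, Finset.prod_range_succ]
lemma poch_succ' (a : ℂ) (k : ℕ) : poch a (k+1) = a * poch (a+1) k := by
  unfold poch
  rw [Finset.prod_range_succ']
  simp only [Nat.cast_zero, add_zero]
  rw [mul_comm]
  congr 1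
  apply Finset.prod_congr rfl
  intro i _
  push_cast
  ring
lemma poch_factor_ne (x : ℂ) {m : ℕ} (h : poch x m ≠ 0) : ∀ i < m, x + (i:ℂ) ≠ 0 := by
  intro i hi hx
  exact h (Finset.prod_eq_zero (Finset.mem_range.2 hi) hx)
lemma poch_ne_of (x : ℂ) {m : ℕ} (h : ∀ i < m, x + (i:ℂ) ≠ 0) : poch x m ≠ 0 :=
  Finset.prod_ne_zero_iff.2 (fun i hi => h i (Finset.mem_range.1 hi))
lemma poch_neg_self (m : ℕ) : poch (-(m:ℂ)) (m+1) = 0 :=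
  Finset.prod_eq_zero (Finset.mem_range.2 (Nat.lt_succ_self m)) (by simp)
lemma poch_sub_one (x : ℂ) (j : ℕ) : poch (x-1) (j+1) = poch x (j+1) - ((j:ℂ)+1) * poch x j := by
  rw [poch_succ', show x-1+1 = x from by ring, poch_succ]; ring

noncomputable def Gfun (a b c : ℂ) (n : ℕ) : ℕ → ℂ
  | 0 => 0
  | (j+1) => poch a (j+1) * poch b (j+1) * poch (-(n:ℂ)-1) (j+1) /
      ((Nat.factorial j : ℂ) * poch c j * poch (1+a+b-c-(n:ℂ)) j *
        ((-(n:ℂ)-1) * (c+(n:ℂ)) * (c-a-b+(n:ℂ))))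

lemma Gfun_zero (a b c : ℂ) (n : ℕ) : Gfun a b c n 0 = 0 := rfl

lemma Gfun_succ (a b c : ℂ) (n j : ℕ) : Gfun a b c n (j+1) =
    poch a (j+1) * poch b (j+1) * poch (-(n:ℂ)-1) (j+1) /
      ((Nat.factorial j : ℂ) * poch c j * poch (1+a+b-c-(n:ℂ)) j *
        ((-(n:ℂ)-1) * (c+(n:ℂ)) * (c-a-b+(n:ℂ)))) := rfl

lemma WZstep (A B C E K q e1 ej w z : ℂ) (hK : K ≠ 0) (hq : q ≠ 0) (he1 : e1 ≠ 0)
    (hej : ej ≠ 0) (hw : w ≠ 0) (hz : z ≠ 0)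
    (h : A * (ej*z*w) = B * (e1*w) - (C * e1 - E * (q*e1*ej))) :
    A/(K*q*e1) = B/(K*q*ej*z) - (C/(K*q*ej*w*z) - E/(K*w*z)) := by
  have hD : K*q*e1*ej*z*w ≠ 0 := by
    repeat' apply mul_ne_zero
    all_goals assumption
  have h1 : A/(K*q*e1) = A*(ej*z*w)/(K*q*e1*ej*z*w) := by
    rw [div_eq_div_iff (by repeat' apply mul_ne_zero <;> try assumption) hD]; ring
  have h2 : B/(K*q*ej*z) = B*(e1*w)/(K*q*e1*ej*z*w) := by
    rw [div_eq_div_iff (by repeat' apply mul_ne_zero <;> try assumption) hD]; ring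
  have h3 : C/(K*q*ej*w*z) = C*e1/(K*q*e1*ej*z*w) := by
    rw [div_eq_div_iff (by repeat' apply mul_ne_zero <;> try assumption) hD]; ring
  have h4 : E/(K*w*z) = E*(q*e1*ej)/(K*q*e1*ej*z*w) := by
    rw [div_eq_div_iff (by repeat' apply mul_ne_zero <;> try assumption) hD]; ring
  rw [h1, h2, h3, h4, div_sub_div_same, div_sub_div_same, h]

set_option maxHeartbeats 1000000 in
lemma saal (a b c : ℂ) : ∀ n : ℕ, (∀ k ≤ n, poch c k ≠ 0) →
    (∀ k ≤ n, poch (1+a+b-c-(n:ℂ)) k ≠ 0) → (∀ i < n, c-a-b+(i:ℂ) ≠ 0) →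
    ∑ k ∈ Finset.range (n+1), poch a k * poch b k * poch (-(n:ℂ)) k /
      ((Nat.factorial k : ℂ) * poch c k * poch (1+a+b-c-(n:ℂ)) k)
    = poch (c-a) n * poch (c-b) n / (poch c n * poch (c-a-b) n) := by
  intro n
  induction n with
  | zero => intro _ _ _; simp [poch]
  | succ n ih =>
    intro hc he hf
    have hcast : (1+a+b-c-((n+1:ℕ):ℂ)) = 1+a+b-c-(n:ℂ)-1 := by push_cast; ring
    have hcast2 : (-((n+1:ℕ):ℂ)) = -(n:ℂ)-1 := by push_cast; ring
    simp only [hcast, hcast2]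
    have he1 : ∀ k ≤ n+1, poch (1+a+b-c-(n:ℂ)-1) k ≠ 0 := by
      intro k hk; have h := he k hk; rwa [hcast] at h
    have hE : ∀ k ≤ n, poch (1+a+b-c-(n:ℂ)) k ≠ 0 := by
      intro k hk
      have h := he1 (k+1) (by omega)
      rw [poch_succ', show 1+a+b-c-(n:ℂ)-1+1 = 1+a+b-c-(n:ℂ) from by ring] at h
      exact (mul_ne_zero_iff.1 h).2
    have heM1 : (1+a+b-c-(n:ℂ)-1) ≠ 0 := by
      have h := he1 1 (by omega); rwa [poch_one] at h
    have hd : c-a-b+(n:ℂ) ≠ 0 := hf n (Nat.lt_succ_self n)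
    have hcn : c+(n:ℂ) ≠ 0 := poch_factor_ne c (hc (n+1) le_rfl) n (Nat.lt_succ_self n)
    have hn1 : (-(n:ℂ)-1) ≠ 0 := by
      intro h
      exact (Nat.cast_add_one_ne_zero n : ((n:ℂ)+1) ≠ 0) (by linear_combination -h)
    have ihS := ih (fun k hk => hc k (by omega)) hE (fun i hi => hf i (by omega))
    have key : ∀ k ∈ Finset.range (n+1),
        poch a k * poch b k * poch (-(n:ℂ)-1) k /
          ((Nat.factorial k : ℂ) * poch c k * poch (1+a+b-c-(n:ℂ)-1) k)
        = (c-a+(n:ℂ))*(c-b+(n:ℂ))/((c+(n:ℂ))*(c-a-b+(n:ℂ))) *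
            (poch a k * poch b k * poch (-(n:ℂ)) k /
              ((Nat.factorial k : ℂ) * poch c k * poch (1+a+b-c-(n:ℂ)) k))
          - (Gfun a b c n (k+1) - Gfun a b c n k) := by
      intro k hk
      rw [Finset.mem_range] at hk
      rcases k with _ | j
      · simp only [Gfun_zero, Gfun_succ, zero_add, poch_zero, poch_one, Nat.factorial_zero,
          Nat.cast_one]
        field_simp
        ring
      · have hjn : j + 1 ≤ n := by omega
        have hfj : ((Nat.factorial j : ℂ)) ≠ 0 := Nat.cast_ne_zero.2 (Nat.factorial_ne_zero j)
        have hpc : poch c j ≠ 0 := hc j (by omega)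
        have hcj : c+(j:ℂ) ≠ 0 := poch_factor_ne c (hc (j+1) (by omega)) j (Nat.lt_succ_self j)
        have hpe : poch (1+a+b-c-(n:ℂ)) j ≠ 0 := hE j (by omega)
        have hej : 1+a+b-c-(n:ℂ)+(j:ℂ) ≠ 0 :=
          poch_factor_ne _ (hE (j+1) (by omega)) j (Nat.lt_succ_self j)
        have hj1 : ((j:ℂ)+1) ≠ 0 := Nat.cast_add_one_ne_zero j
        rw [Gfun_succ a b c n (j+1), Gfun_succ a b c n j]
        rw [poch_succ a (j+1), poch_succ b (j+1)]
        rw [show poch (-(n:ℂ)-1) (j+1+1) = (-(n:ℂ)-1) * (poch (-(n:ℂ)) j * (-(n:ℂ)+(j:ℂ)))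
            from by rw [poch_succ', show -(n:ℂ)-1+1 = -(n:ℂ) from by ring, poch_succ]]
        rw [show poch (-(n:ℂ)-1) (j+1) = (-(n:ℂ)-1) * poch (-(n:ℂ)) j
            from by rw [poch_succ', show -(n:ℂ)-1+1 = -(n:ℂ) from by ring]]
        rw [show poch (1+a+b-c-(n:ℂ)-1) (j+1) = (1+a+b-c-(n:ℂ)-1) * poch (1+a+b-c-(n:ℂ)) j
            from by rw [poch_succ', show 1+a+b-c-(n:ℂ)-1+1 = 1+a+b-c-(n:ℂ) from by ring]]
        rw [poch_succ (-(n:ℂ)) j, poch_succ c j, poch_succ (1+a+b-c-(n:ℂ)) j,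
          Nat.factorial_succ]
        push_cast
        generalize poch a (j+1) = Pa
        generalize poch b (j+1) = Pb
        generalize hPn : poch (-(n:ℂ)) j = Pn
        generalize hPc : poch c j = Pc at hpc ⊢
        generalize hPe : poch (1+a+b-c-(n:ℂ)) j = Pe at hpe ⊢
        generalize hF : ((Nat.factorial j : ℕ) : ℂ) = F at hfj ⊢
        rw [div_mul_div_comm]
        rw [show ((j:ℂ)+1)*F*(Pc*(c+(j:ℂ)))*((1+a+b-c-(n:ℂ)-1)*Pe) = (F*Pc*Pe)*(((j:ℂ)+1)*(c+(j:ℂ)))*(1+a+b-c-(n:ℂ)-1) from by ring,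
            show (c+(n:ℂ))*(c-a-b+(n:ℂ))*(((j:ℂ)+1)*F*(Pc*(c+(j:ℂ)))*(Pe*(1+a+b-c-(n:ℂ)+(j:ℂ)))) = (F*Pc*Pe)*(((j:ℂ)+1)*(c+(j:ℂ)))*(1+a+b-c-(n:ℂ)+(j:ℂ))*((c+(n:ℂ))*(c-a-b+(n:ℂ))) from by ring,
            show ((j:ℂ)+1)*F*(Pc*(c+(j:ℂ)))*(Pe*(1+a+b-c-(n:ℂ)+(j:ℂ)))*((-(n:ℂ)-1)*(c+(n:ℂ))*(c-a-b+(n:ℂ))) = (F*Pc*Pe)*(((j:ℂ)+1)*(c+(j:ℂ)))*(1+a+b-c-(n:ℂ)+(j:ℂ))*(-(n:ℂ)-1)*((c+(n:ℂ))*(c-a-b+(n:ℂ))) from by ring,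
            show F*Pc*Pe*((-(n:ℂ)-1)*(c+(n:ℂ))*(c-a-b+(n:ℂ))) = (F*Pc*Pe)*(-(n:ℂ)-1)*((c+(n:ℂ))*(c-a-b+(n:ℂ))) from by ring]
        exact WZstep (Pa * Pb * ((-(n:ℂ) - 1) * Pn))
          ((c - a + (n:ℂ)) * (c - b + (n:ℂ)) * (Pa * Pb * (Pn * (-(n:ℂ) + (j:ℂ)))))
          (Pa * (a + ((j:ℂ) + 1)) * (Pb * (b + ((j:ℂ) + 1))) * ((-(n:ℂ) - 1) * (Pn * (-(n:ℂ) + (j:ℂ)))))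
          (Pa * Pb * ((-(n:ℂ) - 1) * Pn))
          (F * Pc * Pe) (((j:ℂ) + 1) * (c + (j:ℂ))) (1 + a + b - c - (n:ℂ) - 1) (1 + a + b - c - (n:ℂ) + (j:ℂ))
          (-(n:ℂ) - 1) ((c + (n:ℂ)) * (c - a - b + (n:ℂ)))
          (by repeat' apply mul_ne_zero
              all_goals assumption)
          (mul_ne_zero hj1 hcj) heM1 hej hn1 (mul_ne_zero hcn hd)
          (by ring)
    rw [Finset.sum_range_succ, Finset.sum_congr rfl key, Finset.sum_sub_distrib,
      ← Finset.mul_sum, Finset.sum_range_sub (Gfun a b c n), ihS]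
    have hG0 : Gfun a b c n 0 = 0 := rfl
    have hfn : ((Nat.factorial n : ℂ)) ≠ 0 := Nat.cast_ne_zero.2 (Nat.factorial_ne_zero n)
    have hpcn : poch c n ≠ 0 := hc n (by omega)
    have hpen : poch (1+a+b-c-(n:ℂ)) n ≠ 0 := hE n le_rfl
    have hnn1 : ((n:ℂ)+1) ≠ 0 := Nat.cast_add_one_ne_zero n
    have hbd : poch a (n+1) * poch b (n+1) * poch (-(n:ℂ)-1) (n+1) /
          ((Nat.factorial (n+1) : ℂ) * poch c (n+1) * poch (1+a+b-c-(n:ℂ)-1) (n+1))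
        = Gfun a b c n (n+1) := by
      rw [Gfun_succ]
      rw [poch_succ c n,
        show poch (1+a+b-c-(n:ℂ)-1) (n+1) = (1+a+b-c-(n:ℂ)-1) * poch (1+a+b-c-(n:ℂ)) n
          from by rw [poch_succ', show 1+a+b-c-(n:ℂ)-1+1 = 1+a+b-c-(n:ℂ) from by ring],
        Nat.factorial_succ]
      push_cast
      field_simp
      try ring
      try tauto
    rw [hG0, hbd]
    have hsig : (c-a+(n:ℂ))*(c-b+(n:ℂ))/((c+(n:ℂ))*(c-a-b+(n:ℂ))) *
          (poch (c-a) n * poch (c-b) n / (poch c n * poch (c-a-b) n))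
        = poch (c-a) (n+1) * poch (c-b) (n+1) / (poch c (n+1) * poch (c-a-b) (n+1)) := by
      have hpcab : poch (c-a-b) n ≠ 0 := poch_ne_of _ (fun i hi => hf i (by omega))
      rw [poch_succ (c-a) n, poch_succ (c-b) n, poch_succ c n, poch_succ (c-a-b) n]
      field_simp
    linear_combination hsig

lemma stephelper (A B C K R S e1 d1 j1 : ℂ) (hK : K ≠ 0) (hR : R ≠ 0) (hS : S ≠ 0)
    (he1 : e1 ≠ 0) (hd1 : d1 ≠ 0) (hj1 : j1 ≠ 0)
    (h : A = B - j1 * C) :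
    A/(j1*K*(d1*R)*(e1*S)) = B/(j1*K*(d1*R)*(e1*S)) - C/(d1*e1*(K*R*S)) := by
  have key : C/(d1*e1*(K*R*S)) = j1*C/(j1*K*(d1*R)*(e1*S)) := by
    rw [div_eq_div_iff (by repeat' apply mul_ne_zero <;> try assumption)
      (by repeat' apply mul_ne_zero <;> try assumption)]
    ring
  rw [key, ← sub_div, h]

set_option maxHeartbeats 1000000 in
theorem stmt4 (a b c : ℂ) (n : ℕ) (hn : 0 < n)
    (h1 : ∀ k ≤ n, poch (1 + c) k ≠ 0)
    (h2 : ∀ k ≤ n, poch (1 + a + b - c - n) k ≠ 0)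
    (h3 : c - a ≠ 0) (h4 : c - b ≠ 0) (h5 : poch (c - a - b) n ≠ 0) :
    ∑ k ∈ Finset.range (n + 1),
        poch a k * poch b k * poch (-(n : ℂ)) k /
          ((Nat.factorial k : ℂ) * poch (1 + c) k * poch (1 + a + b - c - n) k) =
      (1 + (n : ℂ) * (c - a - b) / ((c - a) * (c - b))) *
        (poch (c - a) n * poch (c - b) n / (poch (1 + c) n * poch (c - a - b) n)) := by
  obtain ⟨m, rfl⟩ : ∃ m, n = m + 1 := ⟨n - 1, by omega⟩
  have c1 : (((m+1:ℕ)):ℂ) = (m:ℂ)+1 := by push_cast; ring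
  have h2' : ∀ k ≤ m+1, poch (1+a+b-(1+c)-(m:ℂ)) k ≠ 0 := by
    intro k hk
    have h := h2 k hk
    rwa [show (1+a+b-c-((m+1:ℕ):ℂ)) = 1+a+b-(1+c)-(m:ℂ) from by push_cast; ring] at h
  have hc1 : (1+c) ≠ 0 := by have h := h1 1 (by omega); rwa [poch_one] at h
  have hE1 : (1+a+b-(1+c)-(m:ℂ)) ≠ 0 := by have h := h2' 1 (by omega); rwa [poch_one] at h
  have hcab : c-a-b ≠ 0 := by
    have h := poch_factor_ne _ h5 0 (by omega)
    simpa using h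
  have hcabm : c-a-b+(m:ℂ) ≠ 0 := poch_factor_ne _ h5 m (by omega)
  have hcm : 1+c+(m:ℂ) ≠ 0 := poch_factor_ne _ (h1 (m+1) le_rfl) m (by omega)
  have hp1c : poch (1+c) m ≠ 0 := h1 m (by omega)
  have hpcab : poch (c-a-b) m ≠ 0 := poch_ne_of _ (fun i hi => poch_factor_ne _ h5 i (by omega))
  have h2c : ∀ k ≤ m, poch (2+c) k ≠ 0 := by
    intro k hk
    have h := h1 (k+1) (by omega)
    rw [poch_succ', show (1+c)+1 = 2+c from by ring] at h
    exact (mul_ne_zero_iff.1 h).2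
  have hE2 : ∀ k ≤ m, poch (1+(a+1)+(b+1)-(2+c)-(m:ℂ)) k ≠ 0 := by
    intro k hk
    have h := h2' (k+1) (by omega)
    rw [poch_succ', show (1+a+b-(1+c)-(m:ℂ))+1 = 1+(a+1)+(b+1)-(2+c)-(m:ℂ) from by ring] at h
    exact (mul_ne_zero_iff.1 h).2
  have S1 := saal a b (1+c) m (fun k hk => h1 k (by omega)) (fun k hk => h2' k (by omega))
    (by intro i hi hz
        apply poch_factor_ne _ h5 (i+1) (by omega)
        push_cast
        linear_combination hz)
  have S2 := saal (a+1) (b+1) (2+c) m h2c hE2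
    (by intro i hi hz
        apply poch_factor_ne _ h5 i (by omega)
        linear_combination hz)
  rw [show (2+c-(a+1)-(b+1):ℂ) = c-a-b from by ring, show (2+c-(a+1):ℂ) = 1+c-a from by ring,
      show (2+c-(b+1):ℂ) = 1+c-b from by ring] at S2
  simp only [c1]
  simp only [show -((m:ℂ)+1) = -(m:ℂ)-1 from by ring,
             show 1+a+b-c-((m:ℂ)+1) = 1+a+b-(1+c)-(m:ℂ) from by ring]
  rw [Finset.sum_range_succ']
  have step1 : ∀ k ∈ Finset.range (m+1),
      poch a (k + 1) * poch b (k + 1) * poch (-(m:ℂ) - 1) (k + 1) /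
          ((Nat.factorial (k+1) : ℂ) * poch (1 + c) (k + 1) * poch (1 + a + b - (1 + c) - (m:ℂ)) (k + 1))
      = poch a (k + 1) * poch b (k + 1) * poch (-(m:ℂ)) (k + 1) /
          ((Nat.factorial (k+1) : ℂ) * poch (1 + c) (k + 1) * poch (1 + a + b - (1 + c) - (m:ℂ)) (k + 1))
        - a*b*(poch (a+1) k * poch (b+1) k * poch (-(m:ℂ)) k) /
          ((1+c)*(1+a+b-(1+c)-(m:ℂ)) *
            ((Nat.factorial k : ℂ) * poch (2+c) k * poch (1+(a+1)+(b+1)-(2+c)-(m:ℂ)) k)) := by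
    intro k hk
    rw [Finset.mem_range] at hk
    have hfk : ((Nat.factorial k : ℕ) : ℂ) ≠ 0 := Nat.cast_ne_zero.2 (Nat.factorial_ne_zero k)
    have hk1 : ((k:ℂ)+1) ≠ 0 := Nat.cast_add_one_ne_zero k
    have hRc : poch (2+c) k ≠ 0 := h2c k (by omega)
    have hSe : poch (1+(a+1)+(b+1)-(2+c)-(m:ℂ)) k ≠ 0 := hE2 k (by omega)
    rw [poch_sub_one (-(m:ℂ)) k, poch_succ' a k, poch_succ' b k, poch_succ' (1+c) k,
      poch_succ' (1+a+b-(1+c)-(m:ℂ)) k, show ((1+c)+1 : ℂ) = 2+c from by ring,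
      show (1+a+b-(1+c)-(m:ℂ))+1 = 1+(a+1)+(b+1)-(2+c)-(m:ℂ) from by ring,
      poch_succ (-(m:ℂ)) k, Nat.factorial_succ]
    push_cast
    exact stephelper
      (a * poch (a+1) k * (b * poch (b+1) k) *
        (poch (-(m:ℂ)) k * (-(m:ℂ) + (k:ℂ)) - ((k:ℂ)+1) * poch (-(m:ℂ)) k))
      (a * poch (a+1) k * (b * poch (b+1) k) * (poch (-(m:ℂ)) k * (-(m:ℂ) + (k:ℂ))))
      (a*b*(poch (a+1) k * poch (b+1) k * poch (-(m:ℂ)) k))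
      ((Nat.factorial k : ℂ)) (poch (2+c) k) (poch (1+(a+1)+(b+1)-(2+c)-(m:ℂ)) k)
      (1+a+b-(1+c)-(m:ℂ)) (1+c) ((k:ℂ)+1)
      hfk hRc hSe hE1 hc1 hk1 (by ring)
  rw [Finset.sum_congr rfl step1, Finset.sum_sub_distrib]
  have hW : ∑ x ∈ Finset.range (m+1),
      a * b * (poch (a + 1) x * poch (b + 1) x * poch (-(m:ℂ)) x) /
        ((1 + c) * (1 + a + b - (1 + c) - (m:ℂ)) *
          ((Nat.factorial x : ℂ) * poch (2 + c) x * poch (1 + (a + 1) + (b + 1) - (2 + c) - (m:ℂ)) x))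
      = a * b / ((1 + c) * (1 + a + b - (1 + c) - (m:ℂ))) *
        ∑ x ∈ Finset.range (m+1),
          poch (a + 1) x * poch (b + 1) x * poch (-(m:ℂ)) x /
            ((Nat.factorial x : ℂ) * poch (2 + c) x * poch (1 + (a + 1) + (b + 1) - (2 + c) - (m:ℂ)) x) := by
    rw [Finset.mul_sum]
    refine Finset.sum_congr rfl fun x _ => ?_
    rw [div_mul_div_comm]
  rw [hW, S2]
  have hum : poch a (m+1) * poch b (m+1) * poch (-(m:ℂ)) (m+1) /
      ((Nat.factorial (m+1) : ℂ) * poch (1+c) (m+1) * poch (1+a+b-(1+c)-(m:ℂ)) (m+1)) = 0 := by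
    rw [poch_neg_self]
    simp
  have e := Finset.sum_range_succ' (fun k => poch a k * poch b k * poch (-(m:ℂ)) k /
      ((Nat.factorial k : ℂ) * poch (1+c) k * poch (1+a+b-(1+c)-(m:ℂ)) k)) (m+1)
  have e2 := Finset.sum_range_succ (fun k => poch a k * poch b k * poch (-(m:ℂ)) k /
      ((Nat.factorial k : ℂ) * poch (1+c) k * poch (1+a+b-(1+c)-(m:ℂ)) k)) (m+1)
  beta_reduce at e e2
  rw [S1, hum] at e2
  have hf0 : poch a 0 * poch b 0 * poch (-(m:ℂ) - 1) 0 /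
      ((Nat.factorial 0 : ℂ) * poch (1 + c) 0 * poch (1 + a + b - (1 + c) - (m:ℂ)) 0) = 1 := by
    norm_num [poch]
  have hu0 : poch a 0 * poch b 0 * poch (-(m:ℂ)) 0 /
      ((Nat.factorial 0 : ℂ) * poch (1 + c) 0 * poch (1 + a + b - (1 + c) - (m:ℂ)) 0) = 1 := by
    norm_num [poch]
  have final : poch (1+c-a) m * poch (1+c-b) m / (poch (1+c) m * poch (1+c-a-b) m)
      - a*b/((1+c)*(1+a+b-(1+c)-(m:ℂ))) *
        (poch (1+c-a) m * poch (1+c-b) m / (poch (2+c) m * poch (c-a-b) m))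
      = (1 + ((m:ℂ)+1)*(c-a-b)/((c-a)*(c-b))) *
        (poch (c-a) (m+1) * poch (c-b) (m+1) / (poch (1+c) (m+1) * poch (c-a-b) (m+1))) := by
    rw [show poch (c-a) (m+1) = (c-a) * poch (1+c-a) m from by
          rw [poch_succ', show (c-a+1:ℂ) = 1+c-a from by ring],
        show poch (c-b) (m+1) = (c-b) * poch (1+c-b) m from by
          rw [poch_succ', show (c-b+1:ℂ) = 1+c-b from by ring],
        show poch (1+c) (m+1) = (1+c) * poch (2+c) m from by
          rw [poch_succ', show ((1+c)+1:ℂ) = 2+c from by ring],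
        show poch (c-a-b) (m+1) = (c-a-b) * poch (1+c-a-b) m from by
          rw [poch_succ', show (c-a-b+1:ℂ) = 1+c-a-b from by ring]]
    have hrel1 : (1+c) * poch (2+c) m = poch (1+c) m * (1+c+(m:ℂ)) := by
      have A := poch_succ (1+c) m
      have B := poch_succ' (1+c) m
      rw [show ((1+c)+1:ℂ) = 2+c from by ring] at B
      linear_combination A - B
    have hrel2 : (c-a-b) * poch (1+c-a-b) m = poch (c-a-b) m * (c-a-b+(m:ℂ)) := by
      have A := poch_succ (c-a-b) m
      have B := poch_succ' (c-a-b) m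
      rw [show (c-a-b+1:ℂ) = 1+c-a-b from by ring] at B
      linear_combination A - B
    have hR : poch (2+c) m ≠ 0 := h2c m le_rfl
    have hD1 : poch (1+c-a-b) m ≠ 0 := by
      intro hz
      rw [hz, mul_zero] at hrel2
      exact (mul_ne_zero hpcab hcabm) hrel2.symm
    have hco : ((c-a)*(c-b) + ((m:ℂ)+1)*(c-a-b))/((c-a)*(c-b))
        = 1 + ((m:ℂ)+1)*(c-a-b)/((c-a)*(c-b)) := by
      rw [add_div, div_self (mul_ne_zero h3 h4)]
    rw [← hco, div_mul_div_comm, div_mul_div_comm]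
    have hDEN : poch (1+c) m * poch (1+c-a-b) m * poch (2+c) m * poch (c-a-b) m * (1+c) *
        (1+a+b-(1+c)-(m:ℂ)) * ((c-a)*(c-b)) * (c-a-b) ≠ 0 := by
      repeat' apply mul_ne_zero
      all_goals assumption
    have t1 : poch (1+c-a) m * poch (1+c-b) m / (poch (1+c) m * poch (1+c-a-b) m)
        = poch (1+c-a) m * poch (1+c-b) m * (poch (2+c) m * poch (c-a-b) m * ((1+c) *
            (1+a+b-(1+c)-(m:ℂ))) * ((c-a)*(c-b)) * (c-a-b)) /
          (poch (1+c) m * poch (1+c-a-b) m * poch (2+c) m * poch (c-a-b) m * (1+c) *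
            (1+a+b-(1+c)-(m:ℂ)) * ((c-a)*(c-b)) * (c-a-b)) := by
      rw [div_eq_div_iff (mul_ne_zero hp1c hD1) hDEN]
      ring
    have t2 : a * b * (poch (1+c-a) m * poch (1+c-b) m) /
          ((1+c) * (1+a+b-(1+c)-(m:ℂ)) * (poch (2+c) m * poch (c-a-b) m))
        = a * b * (poch (1+c-a) m * poch (1+c-b) m) *
            (poch (1+c) m * poch (1+c-a-b) m * ((c-a)*(c-b)) * (c-a-b)) /
          (poch (1+c) m * poch (1+c-a-b) m * poch (2+c) m * poch (c-a-b) m * (1+c) *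
            (1+a+b-(1+c)-(m:ℂ)) * ((c-a)*(c-b)) * (c-a-b)) := by
      rw [div_eq_div_iff (by repeat' apply mul_ne_zero <;> try assumption) hDEN]
      ring
    have t3 : ((c-a)*(c-b) + ((m:ℂ)+1)*(c-a-b)) * ((c-a) * poch (1+c-a) m * ((c-b) * poch (1+c-b) m)) /
          ((c-a)*(c-b) * ((1+c) * poch (2+c) m * ((c-a-b) * poch (1+c-a-b) m)))
        = ((c-a)*(c-b) + ((m:ℂ)+1)*(c-a-b)) * ((c-a) * poch (1+c-a) m * ((c-b) * poch (1+c-b) m)) *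
            (poch (1+c) m * poch (c-a-b) m * (1+a+b-(1+c)-(m:ℂ))) /
          (poch (1+c) m * poch (1+c-a-b) m * poch (2+c) m * poch (c-a-b) m * (1+c) *
            (1+a+b-(1+c)-(m:ℂ)) * ((c-a)*(c-b)) * (c-a-b)) := by
      rw [div_eq_div_iff (by repeat' apply mul_ne_zero <;> try assumption) hDEN]
      ring
    rw [t1, t2, t3, div_sub_div_same]
    congr 1
    linear_combination (poch (1+c-a) m * poch (1+c-b) m * poch (c-a-b) m *
        (1+a+b-(1+c)-(m:ℂ)) * ((c-a)*(c-b)) * (c-a-b)) * hrel1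
      - (a*b*poch (1+c-a) m * poch (1+c-b) m * ((c-a)*(c-b)) * poch (1+c) m) * hrel2
  linear_combination e2 - e + final + hf0 - hu0
end

section
/- For nonnegative integers $p,q$ with $p\ge q$ and a positive integer $n$, $\sum_{k=0}^n(-1)^k\binom{n}{k}\frac{\binom{2p-q+n+k}{k}\binom{q+k}{k}}{\binom{p+k}{k}^2}\,\frac{q}{q+k}\,H_{p+k}^{\langle2\rangle}=\frac{\binom{p-q+n}{n}^2}{\binom{p+n}{n}^2}\Big(H_{p-q}^{\langle2\rangle}+H_{p+n}^{\langle2\rangle}-H_{p-q+n}^{\langle2\rangle}\Big)$. -/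
open Finset

noncomputable def Hr (l m : ℕ) : ℝ :=
  ∑ k ∈ Finset.range m, 1 / ((k : ℝ) + 1) ^ l

noncomputable def gbinomR (w : ℝ) (k : ℕ) : ℝ :=
  (∏ i ∈ Finset.range k, (w - i)) / (Nat.factorial k)

/-!
Write `q = s + 1` and `p = s + r + 1`. The summand `F n k` is a hypergeometric term in both
variables, and a Wilf–Zeilberger style certificate `G n k` (a rational multiple of the
row-`(n + 1)` term) gives `F (n + 1) k = c n * F n k + λ n * (G n (k + 1) - G n k)`.
Summing over `k` telescopes, so `∑ₖ F n k` satisfies the first-order recurrence of the closed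
form `R n = C(r+n,n)² / C(p+n,n)²`. With the weight `H⁽²⁾_{p+k}`, summation by parts turns the
difference of `G` into `G n (k + 1) / (p + k + 1)²`; the square cancels the one in `G`, and what
is left is `∑ₖ k T k` for the row-`(n + 1)` term `T`, which a second certificate evaluates as a
multiple of `R n`.
-/

lemma Hr_succ (l m : ℕ) : Hr l (m + 1) = Hr l m + 1 / ((m : ℝ) + 1) ^ l := by
  simp only [Hr, sum_range_succ]

lemma sum_range_eq_of_telescope {M : Type*} [AddCommGroup M] {u v w : ℕ → M} (N : ℕ)
    (h : ∀ k, u k = v k + (w (k + 1) - w k)) (h0 : w 0 = 0) (hN : w N = 0) :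
    ∑ k ∈ range N, u k = ∑ k ∈ range N, v k := by
  simp only [h, sum_add_distrib, sum_range_sub, h0, hN, sub_zero, add_zero]

namespace Nat

variable {K : Type*}

lemma cast_choose_succ_right [Ring K] (N k : ℕ) :
    (N.choose (k + 1) : K) * (k + 1) = N.choose k * ((N : K) - k) := by
  rcases le_or_gt k N with h | h
  · have := congrArg (Nat.cast : ℕ → K) (Nat.choose_succ_right_eq N k)
    push_cast [Nat.cast_sub h] at this
    exact this
  · simp [Nat.choose_eq_zero_of_lt h, Nat.choose_eq_zero_of_lt (Nat.lt_succ_of_lt h)]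

lemma cast_choose_mul_succ [Ring K] (N k : ℕ) :
    (N.choose k : K) * (N + 1) = (N + 1).choose k * ((N : K) + 1 - k) := by
  rcases le_or_gt k (N + 1) with h | h
  · have := congrArg (Nat.cast : ℕ → K) (Nat.choose_mul_succ_eq N k)
    push_cast [Nat.cast_sub h] at this
    exact this
  · simp [Nat.choose_eq_zero_of_lt h, Nat.choose_eq_zero_of_lt (Nat.lt_of_succ_lt h)]

variable [Field K] [CharZero K]

lemma cast_choose_ne_zero (a k : ℕ) : ((a + k).choose k : K) ≠ 0 :=
  Nat.cast_ne_zero.mpr (Nat.choose_pos (Nat.le_add_left k a)).ne'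

lemma cast_choose_add_succ (m k : ℕ) :
    ((m + (k + 1)).choose (k + 1) : K) = (m + k).choose k * ((m : K) + k + 1) / (k + 1) := by
  rw [eq_div_iff (Nat.cast_add_one_ne_zero k), ← add_assoc]
  exact_mod_cast (Nat.add_one_mul_choose_eq (m + k) k).symm.trans (Nat.mul_comm _ _)

lemma cast_choose_add_mul_div (m k : ℕ) :
    ((m + 1 + k).choose k : K) * (((m : K) + 1) / ((m : K) + 1 + k)) = (m + k).choose k := by
  have h := cast_choose_mul_succ (K := K) (m + k) k
  rw [mul_div_assoc', div_eq_iff (by norm_cast; omega),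
    Nat.add_right_comm]
  push_cast at h ⊢
  linear_combination -h

end Nat

/-- The `k`-th term of the terminating series `₃F₂(-N, M + 1, s + 1; a + 1, a + 1; 1)`. -/
noncomputable def hyperTerm (N M s a k : ℕ) : ℝ :=
  (-1) ^ k * (N.choose k : ℝ) *
    ((M + k).choose k * (s + k).choose k / ((a + k).choose k : ℝ) ^ 2)

section

variable (N M s a k : ℕ)

lemma hyperTerm_eq_zero_of_lt {k : ℕ} (h : N < k) : hyperTerm N M s a k = 0 := by
  simp [hyperTerm, Nat.choose_eq_zero_of_lt h]

lemma hyperTerm_succ :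
    hyperTerm N M s a (k + 1) =
      -(((N : ℝ) - k) * (M + k + 1) * (s + k + 1) / ((k + 1) * (a + k + 1) ^ 2)) *
        hyperTerm N M s a k := by
  have hN : (N.choose (k + 1) : ℝ) = N.choose k * ((N : ℝ) - k) / (k + 1) := by
    rw [eq_div_iff (by positivity), Nat.cast_choose_succ_right]
  have ha : ((a + k).choose k : ℝ) ≠ 0 := Nat.cast_choose_ne_zero a k
  simp only [hyperTerm, hN, Nat.cast_choose_add_succ]
  field_simp
  ring

lemma hyperTerm_succ_upper :
    hyperTerm N (M + 1) s a k = (M + k + 1) / (M + 1) * hyperTerm N M s a k := by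
  have hM : ((M + 1 + k).choose k : ℝ) = (M + k).choose k * ((M : ℝ) + k + 1) / (M + 1) := by
    rw [eq_div_iff (by positivity), ← Nat.cast_choose_add_mul_div M k]
    field_simp
    ring
  have ha : ((a + k).choose k : ℝ) ≠ 0 := Nat.cast_choose_ne_zero a k
  simp only [hyperTerm, hM]
  field_simp

lemma succ_mul_hyperTerm :
    ((N : ℝ) + 1) * hyperTerm N M s a k = ((N : ℝ) + 1 - k) * hyperTerm (N + 1) M s a k := by
  simp only [hyperTerm]
  linear_combination ((-1) ^ k * ((M + k).choose k * (s + k).choose k /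
    ((a + k).choose k : ℝ) ^ 2)) * Nat.cast_choose_mul_succ (K := ℝ) N k

end

/-- The summand of the theorem for `q = s + 1` and `p = s + r + 1`, where
`C(q+k,k) q / (q+k) = C(s+k,k)`. -/
noncomputable def wzTerm (s r n k : ℕ) : ℝ :=
  hyperTerm n (s + 2 * r + n + 1) s (s + r + 1) k

noncomputable def wzCert (s r n k : ℕ) : ℝ :=
  -((k : ℝ) * ((s : ℝ) + r + 1 + k) ^ 2 / ((s : ℝ) + r + n + 2) ^ 2) *
    hyperTerm (n + 1) (s + 2 * r + n + 1) s (s + r + 1) k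

noncomputable def closedForm (s r n : ℕ) : ℝ :=
  ((r + n).choose n : ℝ) ^ 2 / ((s + r + 1 + n).choose n : ℝ) ^ 2

section

variable (s r n k : ℕ)

lemma wzTerm_succ_eq_mul_hyperTerm :
    wzTerm s r (n + 1) k = ((s : ℝ) + 2 * r + n + k + 2) / ((s : ℝ) + 2 * r + n + 2) *
      hyperTerm (n + 1) (s + 2 * r + n + 1) s (s + r + 1) k := by
  rw [wzTerm, show s + 2 * r + (n + 1) + 1 = s + 2 * r + n + 1 + 1 by ring,
    hyperTerm_succ_upper]
  push_cast
  ring_nf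

lemma wzTerm_eq_mul_hyperTerm :
    wzTerm s r n k = ((n : ℝ) + 1 - k) / ((n : ℝ) + 1) *
      hyperTerm (n + 1) (s + 2 * r + n + 1) s (s + r + 1) k := by
  rw [div_mul_eq_mul_div, eq_div_iff (by positivity), mul_comm, wzTerm, succ_mul_hyperTerm]

lemma wzCert_succ_eq_mul_hyperTerm :
    wzCert s r n (k + 1) = ((n : ℝ) + 1 - k) * ((s : ℝ) + 2 * r + n + k + 2) * ((s : ℝ) + k + 1) /
      ((s : ℝ) + r + n + 2) ^ 2 * hyperTerm (n + 1) (s + 2 * r + n + 1) s (s + r + 1) k := by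
  have ha : (s : ℝ) + r + 1 + k + 1 ≠ 0 := by positivity
  rw [wzCert, hyperTerm_succ]
  push_cast
  field_simp
  ring

lemma wzTerm_succ_eq :
    wzTerm s r (n + 1) k = ((r : ℝ) + n + 1) ^ 2 / ((s : ℝ) + r + n + 2) ^ 2 * wzTerm s r n k +
      ((s : ℝ) + 2 * r + 2 * n + 3) / (((s : ℝ) + 2 * r + n + 2) * (n + 1)) *
        (wzCert s r n (k + 1) - wzCert s r n k) := by
  rw [wzTerm_succ_eq_mul_hyperTerm, wzTerm_eq_mul_hyperTerm, wzCert_succ_eq_mul_hyperTerm, wzCert]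
  field_simp
  ring

lemma cast_mul_hyperTerm_eq :
    (k : ℝ) * hyperTerm (n + 1) (s + 2 * r + n + 1) s (s + r + 1) k =
      -(((s : ℝ) + 1) * (n + 1) * ((s : ℝ) + 2 * r + n + 2) / ((s : ℝ) + r + n + 2) ^ 2) *
          wzTerm s r n k + (wzCert s r n (k + 1) - wzCert s r n k) := by
  rw [wzTerm_eq_mul_hyperTerm, wzCert_succ_eq_mul_hyperTerm, wzCert]
  field_simp
  ring

lemma wzCert_div_sq :
    wzCert s r n k / ((s : ℝ) + r + 1 + k) ^ 2 =
      -((k : ℝ) * hyperTerm (n + 1) (s + 2 * r + n + 1) s (s + r + 1) k /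
        ((s : ℝ) + r + n + 2) ^ 2) := by
  have ha : (s : ℝ) + r + 1 + k ≠ 0 := by positivity
  rw [wzCert]
  field_simp

end

section

variable (s r : ℕ)

lemma wzTerm_eq_zero_of_lt {n k : ℕ} (h : n < k) : wzTerm s r n k = 0 :=
  hyperTerm_eq_zero_of_lt _ _ _ _ h

lemma wzCert_zero (n : ℕ) : wzCert s r n 0 = 0 := by
  simp [wzCert]

lemma wzCert_eq_zero_of_lt {n k : ℕ} (h : n + 1 < k) : wzCert s r n k = 0 := by
  simp [wzCert, hyperTerm_eq_zero_of_lt _ _ _ _ h]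

lemma closedForm_succ (n : ℕ) :
    closedForm s r (n + 1) =
      ((r : ℝ) + n + 1) ^ 2 / ((s : ℝ) + r + n + 2) ^ 2 * closedForm s r n := by
  have hr : ((r + n).choose n : ℝ) ≠ 0 := Nat.cast_choose_ne_zero r n
  have ha : ((s + r + 1 + n).choose n : ℝ) ≠ 0 := Nat.cast_choose_ne_zero (s + r + 1) n
  rw [closedForm, closedForm, Nat.cast_choose_add_succ, Nat.cast_choose_add_succ]
  push_cast
  field_simp
  ring

lemma sum_wzTerm_of_le {n N : ℕ} (h : n + 1 ≤ N) :
    ∑ k ∈ range N, wzTerm s r n k = ∑ k ∈ range (n + 1), wzTerm s r n k :=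
  eventually_constant_sum (fun _ hk => wzTerm_eq_zero_of_lt s r hk) h

lemma sum_wzTerm (n : ℕ) : ∑ k ∈ range (n + 1), wzTerm s r n k = closedForm s r n := by
  induction n with
  | zero => simp [wzTerm, hyperTerm, closedForm]
  | succ n ih =>
    rw [sum_range_eq_of_telescope (w := fun k => _ * wzCert s r n k) _
      (fun k => by rw [wzTerm_succ_eq, mul_sub]) (by rw [wzCert_zero, mul_zero])
      (by rw [wzCert_eq_zero_of_lt s r (by omega), mul_zero]), ← mul_sum,
      sum_wzTerm_of_le s r (by omega), ih, closedForm_succ]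

lemma sum_succ_mul_hyperTerm (n : ℕ) :
    ∑ k ∈ range (n + 2),
        ((k : ℝ) + 1) * hyperTerm (n + 1) (s + 2 * r + n + 1) s (s + r + 1) (k + 1) =
      -(((s : ℝ) + 1) * (n + 1) * ((s : ℝ) + 2 * r + n + 2) / ((s : ℝ) + r + n + 2) ^ 2) *
        closedForm s r n := by
  have hshift := sum_range_succ'
    (fun k => (k : ℝ) * hyperTerm (n + 1) (s + 2 * r + n + 1) s (s + r + 1) k) (n + 2)
  push_cast at hshift
  rw [zero_mul, add_zero] at hshift
  rw [← hshift, sum_range_eq_of_telescope _ (cast_mul_hyperTerm_eq s r n) (wzCert_zero s r n)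
    (wzCert_eq_zero_of_lt s r (by omega)), ← mul_sum, sum_wzTerm_of_le s r (by omega), sum_wzTerm]

end

lemma sum_wzTerm_mul_Hr (s r n : ℕ) :
    ∑ k ∈ range (n + 1), wzTerm s r n k * Hr 2 (s + r + 1 + k) =
      closedForm s r n * (Hr 2 r + Hr 2 (s + r + 1 + n) - Hr 2 (r + n)) := by
  induction n with
  | zero => simp [wzTerm, hyperTerm, closedForm]
  | succ n ih =>
    set D : ℝ := (s : ℝ) + r + n + 2
    set l : ℝ := ((s : ℝ) + 2 * r + 2 * n + 3) / (((s : ℝ) + 2 * r + n + 2) * (n + 1))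
    -- summation by parts against `Hr 2 (m + 1) - Hr 2 m = 1 / (m + 1) ^ 2`
    have step : ∀ k, wzTerm s r (n + 1) k * Hr 2 (s + r + 1 + k) =
        (((r : ℝ) + n + 1) ^ 2 / D ^ 2 * (wzTerm s r n k * Hr 2 (s + r + 1 + k)) +
          l / D ^ 2 * (((k : ℝ) + 1) *
            hyperTerm (n + 1) (s + 2 * r + n + 1) s (s + r + 1) (k + 1))) +
        (l * wzCert s r n (k + 1) * Hr 2 (s + r + 1 + (k + 1)) -
          l * wzCert s r n k * Hr 2 (s + r + 1 + k)) := by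
      intro k
      have h := wzCert_div_sq s r n (k + 1)
      rw [wzTerm_succ_eq, ← add_assoc, Hr_succ]
      push_cast at h ⊢
      linear_combination -l * h
    have key : l / D ^ 2 * -(((s : ℝ) + 1) * (n + 1) * ((s : ℝ) + 2 * r + n + 2) / D ^ 2) =
        ((r : ℝ) + n + 1) ^ 2 / D ^ 2 * (1 / D ^ 2 - 1 / ((r : ℝ) + n + 1) ^ 2) := by
      simp only [D, l]
      field_simp
      ring
    rw [sum_range_eq_of_telescope (w := fun k => l * wzCert s r n k * Hr 2 (s + r + 1 + k)) _ step
      (by simp [wzCert_zero]) (by simp [wzCert_eq_zero_of_lt s r (show n + 1 < n + 2 by omega)]),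
      sum_add_distrib, ← mul_sum, ← mul_sum, sum_succ_mul_hyperTerm, sum_range_succ,
      wzTerm_eq_zero_of_lt s r (Nat.lt_succ_self n), zero_mul, add_zero, ih, closedForm_succ,
      ← add_assoc, ← add_assoc r, Hr_succ, Hr_succ]
    push_cast
    linear_combination closedForm s r n * key

theorem stmt6_general (p q n : ℕ) (hpq : q ≤ p) :
    ∑ k ∈ Finset.range (n + 1), (-1 : ℝ) ^ k * (n.choose k : ℝ) *
        (((2 * p - q + n + k).choose k : ℝ) * ((q + k).choose k : ℝ) /
          ((p + k).choose k : ℝ) ^ 2) *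
        (if k = 0 then 1 else (q : ℝ) / ((q : ℝ) + k)) * Hr 2 (p + k) =
      ((p - q + n).choose n : ℝ) ^ 2 / ((p + n).choose n : ℝ) ^ 2 *
        (Hr 2 (p - q) + Hr 2 (p + n) - Hr 2 (p - q + n)) := by
  obtain ⟨r, rfl⟩ := Nat.exists_eq_add_of_le hpq
  rcases q with _ | s
  · rw [sum_eq_single 0 (fun k _ hk => by simp [hk]) (by simp)]
    simp [div_self (pow_ne_zero 2 (Nat.cast_choose_ne_zero (K := ℝ) r n))]
  · refine (sum_congr rfl fun k _ => ?_).trans ((sum_wzTerm_mul_Hr s r n).trans ?_)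
    · have hq : (if k = 0 then (1 : ℝ) else ((s + 1 : ℕ) : ℝ) / ((s + 1 : ℕ) + k)) =
          ((s : ℝ) + 1) / ((s : ℝ) + 1 + k) := by
        split_ifs with hk
        · rw [hk, Nat.cast_zero, add_zero, div_self (by positivity)]
        · push_cast
          rfl
      rw [hq, show 2 * (s + 1 + r) - (s + 1) + n + k = s + 2 * r + n + 1 + k by omega,
        show s + 1 + r + k = s + r + 1 + k by ring, wzTerm, hyperTerm,
        ← Nat.cast_choose_add_mul_div s k]
      ring
    · rw [closedForm, show s + 1 + r - (s + 1) = r by omega, show s + 1 + r = s + r + 1 by ring]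

theorem stmt6 (p q n : ℕ) (hpq : q ≤ p) (hn : 0 < n) :
    ∑ k ∈ Finset.range (n + 1), (-1 : ℝ) ^ k * (n.choose k : ℝ) *
        (((2 * p - q + n + k).choose k : ℝ) * ((q + k).choose k : ℝ) /
          ((p + k).choose k : ℝ) ^ 2) *
        (if k = 0 then 1 else (q : ℝ) / ((q : ℝ) + k)) * Hr 2 (p + k) =
      ((p - q + n).choose n : ℝ) ^ 2 / ((p + n).choose n : ℝ) ^ 2 *
        (Hr 2 (p - q) + Hr 2 (p + n) - Hr 2 (p - q + n)) :=
  stmt6_general p q n hpq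
end

section
/- For nonnegative integers $p,q$ with $q\ge n$ and positive integer $n$, $\sum_{k=0}^n(-1)^k\binom{n}{k}\frac{\binom{q+k}{k}}{\binom{q-n+k}{k}}\frac{q}{q+k}H_{p+k}=\frac{(-1)^n}{n}\cdot\frac{1}{\binom{q}{n}}\Big(1-\frac{\binom{p-q+n}{n}}{\binom{p+n}{n}}\Big)$. -/
open Finset

noncomputable def sp (q n m : ℕ) : ℝ :=
  ∏ i ∈ Finset.range m, ((q : ℝ) + 1 + i) / ((q : ℝ) - n + 1 + i)

lemma cast_sub_qn {q n : ℕ} (hqn : n ≤ q) : ((q - n : ℕ) : ℝ) = (q : ℝ) - n :=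
  Nat.cast_sub hqn

lemma sp_pos {q n : ℕ} (hqn : n ≤ q) (m : ℕ) : 0 < sp q n m := by
  apply Finset.prod_pos
  intro i _
  apply div_pos
  · positivity
  · have := cast_sub_qn hqn
    have h0 : (0:ℝ) ≤ ((q - n : ℕ) : ℝ) := Nat.cast_nonneg _
    rw [this] at h0
    positivity

lemma sp_succ (q n m : ℕ) :
    sp q n (m+1) = sp q n m * (((q : ℝ) + 1 + m) / ((q : ℝ) - n + 1 + m)) := by
  rw [sp, Finset.prod_range_succ]; rfl

lemma choose_ratio {q n : ℕ} (hqn : n ≤ q) (k : ℕ) :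
    (((q + k).choose k : ℝ) / (((q - n + k).choose k : ℝ))) = sp q n k := by
  have hcast : ((q - n : ℕ) : ℝ) = (q : ℝ) - n := cast_sub_qn hqn
  induction k with
  | zero => simp [sp]
  | succ k ih =>
    have hk1 : ((k : ℝ) + 1) ≠ 0 := by positivity
    have hstep : ∀ a : ℕ, ((a + k + 1).choose (k+1) : ℝ) =
        ((a + k).choose k : ℝ) * ((a : ℝ) + k + 1) / ((k : ℝ)+1) := by
      intro a
      rw [eq_div_iff hk1]
      have h2 : (a+k+1) * (a+k).choose k = (a+k+1).choose (k+1) * (k+1) :=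
        Nat.add_one_mul_choose_eq (a + k) k
      have h3 := congrArg (fun t : ℕ => (t : ℝ)) h2
      push_cast at h3
      linarith [h3]
    have h1 := hstep q
    have h2 := hstep (q - n)
    have hc1 : ((q - n + k).choose k : ℝ) ≠ 0 := by
      exact_mod_cast (Nat.choose_pos (by omega)).ne'
    have hden : (q : ℝ) - n + 1 + k ≠ 0 := by
      have h0 : (0:ℝ) ≤ ((q - n : ℕ) : ℝ) := Nat.cast_nonneg _
      rw [hcast] at h0
      positivity
    have hq1 : (q + (k+1)) = (q + k + 1) := by ring
    have hq2 : (q - n + (k+1)) = (q - n + k + 1) := by ring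
    rw [sp_succ, ← ih, hq1, hq2, h1, h2, hcast]
    set A := ((q + k).choose k : ℝ) with hA
    set B := ((q - n + k).choose k : ℝ) with hB
    have hden2 : (q : ℝ) - n + k + 1 ≠ 0 := by
      intro h; apply hden; linarith
    rw [div_div_div_eq, div_mul_div_comm]
    rw [div_eq_div_iff (mul_ne_zero hk1 (mul_ne_zero hc1 hden2)) (mul_ne_zero hc1 hden)]
    ring

lemma hmain_step (m : ℕ) (s c d Q Cm C C1 : ℝ) (hc : c ≠ 0) (hd : d ≠ 0)
    (hk : C * Q = Cm * c + C1 * d) :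
    (-1:ℝ)^m * Cm * s + (-1:ℝ)^(m+1) * C * (s * (d/c)) * (Q/d) = (-1:ℝ)^(m+1) * C1 * (s * (d/c)) := by
  have hcu : c * c⁻¹ = 1 := mul_inv_cancel₀ hc
  have hdv : d * d⁻¹ = 1 := mul_inv_cancel₀ hd
  linear_combination (-(-1:ℝ)^m * s * c⁻¹ * d * d⁻¹) * hk
    + (-(-1:ℝ)^m * s * Cm - (-1:ℝ)^m * s * C1 * d * c⁻¹) * hdv
    + (-(-1:ℝ)^m * s * Cm * d * d⁻¹) * hcu

noncomputable def Ak (q n k : ℕ) : ℝ :=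
  (-1)^k * (n.choose k : ℝ) * sp q n k * ((q:ℝ)/((q:ℝ)+k))

lemma partial_sum {q n : ℕ} (hn : 0 < n) (hqn : n ≤ q) :
    ∀ m, m ≤ n → ∑ k ∈ Finset.range (m+1), Ak q n k
      = (-1)^m * ((n-1).choose m : ℝ) * sp q n m := by
  have hq0 : (q:ℝ) ≠ 0 := by
    have : 0 < q := lt_of_lt_of_le hn hqn
    positivity
  intro m hm
  induction m with
  | zero => simp [Ak, sp, div_self hq0]
  | succ m ih =>
    obtain ⟨n', rfl⟩ : ∃ n', n = n' + 1 := ⟨n - 1, by omega⟩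
    have hmn : m ≤ n' := by omega
    rw [Finset.sum_range_succ, ih (by omega)]
    have hp : (((n'+1).choose (m+1) : ℕ) : ℝ) = (n'.choose m : ℝ) + (n'.choose (m+1) : ℝ) := by
      rw [Nat.choose_succ_succ]; push_cast; ring
    have hr : (n'.choose (m+1) : ℝ) * ((m:ℝ)+1) = (n'.choose m : ℝ) * ((n':ℝ) - m) := by
      have h := Nat.choose_succ_right_eq n' m
      have h2 := congrArg (fun t : ℕ => (t : ℝ)) h
      push_cast at h2
      rw [Nat.cast_sub hmn] at h2
      push_cast at h2
      linarith [h2]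
    have key : (((n'+1).choose (m+1)) : ℝ) * (q:ℝ)
        = (n'.choose m : ℝ) * ((q:ℝ) - ((n'+1 : ℕ):ℝ) + 1 + (m:ℝ))
          + (n'.choose (m+1) : ℝ) * ((q:ℝ)+1+(m:ℝ)) := by
      push_cast
      linear_combination (q:ℝ) * hp - hr
    have hc : (q:ℝ) - ((n'+1 : ℕ):ℝ) + 1 + (m:ℝ) ≠ 0 := by
      have h0 : (0:ℝ) ≤ ((q - (n'+1) : ℕ) : ℝ) := Nat.cast_nonneg _
      rw [cast_sub_qn hqn] at h0
      push_cast at h0 ⊢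
      intro h; nlinarith
    have hd2 : (q:ℝ) + 1 + (m:ℝ) ≠ 0 := by positivity
    have hdd : (q:ℝ) + ((m+1 : ℕ) : ℝ) = (q:ℝ)+1+(m:ℝ) := by push_cast; ring
    simp only [Nat.add_sub_cancel]
    rw [Ak, sp_succ, hdd]
    exact hmain_step m (sp q (n'+1) m) _ _ _ _ _ _ hc hd2 key

lemma Hr_add (p k : ℕ) : Hr 1 (p + k) = Hr 1 p + ∑ m ∈ Finset.range k, 1/((p:ℝ)+m+1) := by
  rw [Hr, Hr, Finset.sum_range_add]
  congr 1
  apply Finset.sum_congr rfl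
  intro m _
  push_cast
  ring

lemma swap_sum (n : ℕ) (g : ℕ → ℕ → ℝ) :
    ∑ k ∈ Finset.range (n+1), ∑ m ∈ Finset.range k, g m k
      = ∑ m ∈ Finset.range (n+1), ∑ k ∈ Finset.Ico (m+1) (n+1), g m k := by
  have h := Finset.sum_Ico_Ico_comm' 0 (n+1) g
  simp only [← Finset.range_eq_Ico] at h
  exact h.symm

lemma total_zero {q n : ℕ} (hn : 0 < n) (hqn : n ≤ q) :
    ∑ k ∈ Finset.range (n+1), Ak q n k = 0 := by
  rw [partial_sum hn hqn n le_rfl, Nat.choose_eq_zero_of_lt (by omega)]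
  simp

lemma lhs_eq (p q n : ℕ) (hn : 0 < n) (hqn : n ≤ q) :
    ∑ k ∈ Finset.range (n + 1), (-1 : ℝ) ^ k * (n.choose k : ℝ) *
        (((q + k).choose k : ℝ) / ((q - n + k).choose k : ℝ)) *
        ((q : ℝ) / ((q : ℝ) + k)) * Hr 1 (p + k)
      = -∑ m ∈ Finset.range n,
          (-1)^m * ((n-1).choose m : ℝ) * sp q n m / ((p:ℝ)+m+1) := by
  have h1 : ∀ k ∈ Finset.range (n+1), (-1 : ℝ) ^ k * (n.choose k : ℝ) *
        (((q + k).choose k : ℝ) / ((q - n + k).choose k : ℝ)) *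
        ((q : ℝ) / ((q : ℝ) + k)) * Hr 1 (p + k)
      = Ak q n k * Hr 1 p + ∑ m ∈ Finset.range k, Ak q n k * (1/((p:ℝ)+m+1)) := by
    intro k _
    rw [choose_ratio hqn k, Hr_add, ← Finset.mul_sum]
    rw [Ak]
    ring
  rw [Finset.sum_congr rfl h1, Finset.sum_add_distrib, ← Finset.sum_mul,
    total_zero hn hqn, zero_mul, zero_add, swap_sum]
  have h2 : ∀ m ∈ Finset.range (n+1),
      ∑ k ∈ Finset.Ico (m+1) (n+1), Ak q n k * (1/((p:ℝ)+m+1))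
        = -((∑ k ∈ Finset.range (m+1), Ak q n k) * (1/((p:ℝ)+m+1))) := by
    intro m hm
    simp only [Finset.mem_range] at hm
    rw [← Finset.sum_mul, Finset.sum_Ico_eq_sub _ (by omega), total_zero hn hqn]
    ring
  rw [Finset.sum_congr rfl h2, Finset.sum_range_succ,
    partial_sum hn hqn n le_rfl, Nat.choose_eq_zero_of_lt (by omega)]
  simp only [Nat.cast_zero, mul_zero, zero_mul, neg_zero, add_zero]
  rw [← Finset.sum_neg_distrib]
  apply Finset.sum_congr rfl
  intro m hm
  rw [partial_sum hn hqn m (by simp at hm; omega)]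
  ring

-- ℕ factorial product lemma
lemma fact_prod (b : ℕ) : ∀ n : ℕ, (b+n).factorial = b.factorial * ∏ i ∈ Finset.range n, (b+1+i) := by
  intro n
  induction n with
  | zero => simp
  | succ n ih =>
    rw [Finset.prod_range_succ, ← mul_assoc, ← ih, show b + (n+1) = (b+n)+1 by ring,
      Nat.factorial_succ, show b+1+n = b+n+1 by ring, mul_comm]

noncomputable def Ep (q n j : ℕ) : ℝ := ∏ i ∈ Finset.range n, ((q:ℝ) + j + 1 - n + i)

lemma Ep_eq {q n : ℕ} (hn : 0 < n) (hqn : n ≤ q) (j : ℕ) :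
    Ep q n j = (q.choose n : ℝ) * (n.factorial : ℝ) * sp q n j := by
  have hcast : ((q - n : ℕ) : ℝ) = (q : ℝ) - n := cast_sub_qn hqn
  induction j with
  | zero =>
    have h1 : ((q - n + n : ℕ).factorial : ℝ)
        = ((q-n).factorial : ℝ) * ∏ i ∈ Finset.range n, (((q:ℝ)-n)+1+i) := by
      rw [fact_prod (q-n) n]
      push_cast
      rw [hcast]
    rw [Nat.sub_add_cancel hqn] at h1
    have h2 : (q.choose n : ℝ) * n.factorial * (q-n).factorial = (q.factorial : ℝ) := by
      exact_mod_cast congrArg (fun t : ℕ => (t:ℝ)) (Nat.choose_mul_factorial_mul_factorial hqn)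
    have h3 : Ep q n 0 = ∏ i ∈ Finset.range n, (((q:ℝ)-n)+1+i) := by
      apply Finset.prod_congr rfl
      intro i _
      push_cast
      ring
    have hf : ((q-n).factorial : ℝ) ≠ 0 := by exact_mod_cast (Nat.factorial_pos _).ne'
    have := h1.symm.trans h2.symm
    rw [h3, show sp q n 0 = 1 by simp [sp], mul_one]
    exact mul_left_cancel₀ hf (this.trans (by ring))
  | succ j ih =>
    have c := (q:ℝ) + j + 1 - n
    set c : ℝ := (q:ℝ) + j + 1 - n with hc
    have hcpos : 0 < c := by
      have h0 : (0:ℝ) ≤ ((q - n : ℕ) : ℝ) := Nat.cast_nonneg _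
      rw [hcast] at h0
      rw [hc]; push_cast; linarith
    have t0 : ∏ i ∈ Finset.range (n+1), (c + i) = c * ∏ i ∈ Finset.range n, (c + 1 + i) := by
      rw [Finset.prod_range_succ', Nat.cast_zero, add_zero, mul_comm]
      congr 1
      apply Finset.prod_congr rfl
      intro i _
      push_cast
      ring
    have t1 : ∏ i ∈ Finset.range (n+1), (c + i) = (∏ i ∈ Finset.range n, (c + i)) * (c + n) :=
      Finset.prod_range_succ _ _
    have hEj : Ep q n j = ∏ i ∈ Finset.range n, (c + i) := by
      apply Finset.prod_congr rfl
      intro i _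
      first | rfl | (rw [hc]; push_cast; ring)
    have hEj1 : Ep q n (j+1) = ∏ i ∈ Finset.range n, (c + 1 + i) := by
      apply Finset.prod_congr rfl
      intro i _
      first | rfl | (rw [hc]; push_cast; ring)
    have hkey : c * Ep q n (j+1) = Ep q n j * (c + n) := by
      rw [hEj, hEj1, ← t0, t1]
    rw [sp_succ]
    have hden : (q:ℝ) - n + 1 + j ≠ 0 := by
      rw [show (q:ℝ) - n + 1 + j = c by rw [hc]; ring]
      exact hcpos.ne'
    rw [ih] at hkey
    rw [show (q:ℝ) - n + 1 + (j:ℝ) = c by rw [hc]; ring]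
    apply mul_left_cancel₀ hcpos.ne'
    rw [hkey, hc]
    have hc0 : (q:ℝ) + j + 1 - n ≠ 0 := by rw [← hc]; exact hcpos.ne'
    field_simp
    ring

lemma choose_prod (p n : ℕ) :
    ((p+n).choose n : ℝ) * (n.factorial : ℝ) = ∏ i ∈ Finset.range n, ((p:ℝ)+1+i) := by
  have h1 : ((p+n).factorial : ℝ) = (p.factorial : ℝ) * ∏ i ∈ Finset.range n, ((p:ℝ)+1+i) := by
    rw [fact_prod p n]
    push_cast
    ring
  have h2 : ((p+n).choose n : ℝ) * n.factorial * p.factorial = ((p+n).factorial : ℝ) := by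
    have h0 := Nat.choose_mul_factorial_mul_factorial (Nat.le_add_left n p)
    rw [Nat.add_sub_cancel] at h0
    exact_mod_cast congrArg (fun t : ℕ => (t:ℝ)) h0
  have hf : (p.factorial : ℝ) ≠ 0 := by exact_mod_cast (Nat.factorial_pos _).ne'
  have h3 : (p.factorial : ℝ) * (((p+n).choose n : ℝ) * n.factorial)
      = (p.factorial : ℝ) * ∏ i ∈ Finset.range n, ((p:ℝ)+1+i) := by
    rw [← h1, ← h2]; ring
  exact mul_left_cancel₀ hf h3

lemma prod_range_sub (j : ℕ) : ∏ i ∈ Finset.range j, ((i:ℝ) - j) = (-1)^j * (j.factorial : ℝ) := by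
  have h1 : ∏ i ∈ Finset.range j, ((i:ℝ) - j) = (-1)^j * ∏ i ∈ Finset.range j, ((j:ℝ) - i) := by
    have := Finset.prod_congr rfl (fun i (_ : i ∈ Finset.range j) =>
      (by ring : ((i:ℝ) - j) = (-1) * ((j:ℝ) - i)))
    rw [this, Finset.prod_mul_distrib, Finset.prod_const, Finset.card_range]
  have h2 : ∏ i ∈ Finset.range j, ((j:ℝ) - i) = (j.factorial : ℝ) := by
    have hn : ∏ i ∈ Finset.range j, (j - i) = j.factorial := by
      rw [← Finset.prod_range_add_one_eq_factorial j,
        ← Finset.prod_range_reflect (fun i => i + 1) j]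
      apply Finset.prod_congr rfl
      intro i hi
      simp only [Finset.mem_range] at hi
      omega
    rw [← hn]
    push_cast [Nat.cast_sub]
    apply Finset.prod_congr rfl
    intro i hi
    simp only [Finset.mem_range] at hi
    rw [Nat.cast_sub (le_of_lt hi)]
  rw [h1, h2]

lemma prod_Ico_sub (j n : ℕ) (hj : j < n) :
    ∏ i ∈ Finset.Ico (j+1) n, ((i:ℝ) - j) = ((n-1-j).factorial : ℝ) := by
  rw [Finset.prod_Ico_eq_prod_range]
  have h : ∀ i ∈ Finset.range (n - (j+1)), ((j+1+i : ℕ):ℝ) - (j:ℝ) = (i:ℝ)+1 := by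
    intro i _; push_cast; ring
  rw [Finset.prod_congr rfl h]
  have : ∏ i ∈ Finset.range (n - (j+1)), ((i:ℝ)+1) = (((n - (j+1)).factorial : ℕ) : ℝ) := by
    rw [← Finset.prod_range_add_one_eq_factorial]
    push_cast
    rfl
  rw [this]
  congr 2
  omega

lemma erase_prod (j n : ℕ) (hj : j < n) :
    ∏ i ∈ (Finset.range n).erase j, ((i:ℝ) - j)
      = (-1)^j * (j.factorial : ℝ) * ((n-1-j).factorial : ℝ) := by
  have hset : (Finset.range n).erase j = Finset.range j ∪ Finset.Ico (j+1) n := by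
    ext i
    simp only [Finset.mem_erase, Finset.mem_range, Finset.mem_union, Finset.mem_Ico]
    omega
  have hdisj : Disjoint (Finset.range j) (Finset.Ico (j+1) n) := by
    rw [Finset.disjoint_left]
    intro i hi hi2
    simp only [Finset.mem_range] at hi
    simp only [Finset.mem_Ico] at hi2
    omega
  rw [hset, Finset.prod_union hdisj, prod_range_sub, prod_Ico_sub j n hj]

open Polynomial in
noncomputable def Dpoly (n : ℕ) : Polynomial ℝ := ∏ i ∈ Finset.range n, (X + C ((i:ℝ)+1))

open Polynomial in
noncomputable def Npoly (q n : ℕ) : Polynomial ℝ := ∏ i ∈ Finset.range n, (X + C ((n:ℝ)-q-i))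

noncomputable def gam (q n m : ℕ) : ℝ :=
  (-1:ℝ)^(n+1+m) * n * (q.choose n : ℝ) * ((n-1).choose m : ℝ) * sp q n m

open Polynomial in
noncomputable def Rpoly (q n : ℕ) : Polynomial ℝ :=
  ∑ m ∈ Finset.range n, C (gam q n m) * ∏ i ∈ (Finset.range n).erase m, (X + C ((i:ℝ)+1))

open Polynomial in
lemma degree_prod_lin (n : ℕ) (c : ℕ → ℝ) :
    (∏ i ∈ Finset.range n, (X + C (c i))).degree = (n : WithBot ℕ) := by
  rw [Polynomial.degree_prod]
  rw [Finset.sum_congr rfl (fun i _ => Polynomial.degree_X_add_C (c i))]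
  rw [Finset.sum_const, Finset.card_range]
  simp

open Polynomial in
lemma poly_id {q n : ℕ} (hn : 0 < n) (hqn : n ≤ q) :
    Dpoly n - Npoly q n = Rpoly q n := by
  apply Polynomial.eq_of_degrees_lt_of_eval_index_eq (v := fun j : ℕ => -((j:ℝ)+1))
      (Finset.range n)
  · intro a ha b hb hab
    simp only at hab
    have : (a:ℝ) = b := by linarith
    exact_mod_cast this
  · rw [Finset.card_range]
    have hd : (Dpoly n).degree = (n : WithBot ℕ) := degree_prod_lin n _
    have hnn : (Npoly q n).degree = (n : WithBot ℕ) := degree_prod_lin n _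
    have hmD : (Dpoly n).Monic :=
      Polynomial.monic_prod_of_monic _ _ (fun i _ => Polynomial.monic_X_add_C _)
    have hmN : (Npoly q n).Monic :=
      Polynomial.monic_prod_of_monic _ _ (fun i _ => Polynomial.monic_X_add_C _)
    have := Polynomial.degree_sub_lt (hd.trans hnn.symm) hmD.ne_zero (hmD.leadingCoeff.trans hmN.leadingCoeff.symm)
    rwa [hd] at this
  · rw [Finset.card_range]
    apply lt_of_le_of_lt (Polynomial.degree_sum_le _ _)
    rw [Finset.sup_lt_iff (by exact_mod_cast WithBot.bot_lt_coe n)]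
    intro m hm
    have hP : (∏ i ∈ (Finset.range n).erase m, (X + C ((i:ℝ)+1))).degree = ((n-1 : ℕ) : WithBot ℕ) := by
      rw [Polynomial.degree_prod]
      rw [Finset.sum_congr rfl (fun i _ => Polynomial.degree_X_add_C _)]
      rw [Finset.sum_const, Finset.card_erase_of_mem hm, Finset.card_range]
      simp
    calc (C (gam q n m) * ∏ i ∈ (Finset.range n).erase m, (X + C ((i:ℝ)+1))).degree
        ≤ _ + _ := Polynomial.degree_mul_le _ _
      _ ≤ 0 + ((n-1:ℕ) : WithBot ℕ) := add_le_add Polynomial.degree_C_le (le_of_eq hP)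
      _ < (n : WithBot ℕ) := by
          rw [zero_add]
          exact_mod_cast (by omega : n - 1 < n)
  · intro j hj
    simp only [Finset.mem_range] at hj
    rw [Polynomial.eval_sub]
    have hevalprod : ∀ (x : ℝ) (s : Finset ℕ) (c : ℕ → ℝ),
        Polynomial.eval x (∏ i ∈ s, (X + C (c i))) = ∏ i ∈ s, (x + c i) := by
      intro x s c
      rw [Polynomial.eval_prod]
      apply Finset.prod_congr rfl
      intro i _
      simp
    have hD : Polynomial.eval (-((j:ℝ)+1)) (Dpoly n) = 0 := by
      rw [Dpoly, hevalprod]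
      apply Finset.prod_eq_zero (Finset.mem_range.2 hj)
      ring
    have hN : Polynomial.eval (-((j:ℝ)+1)) (Npoly q n) = (-1)^n * Ep q n j := by
      rw [Npoly, hevalprod, Ep]
      rw [Finset.prod_congr rfl (fun i (_ : i ∈ Finset.range n) =>
        (by ring : -((j:ℝ)+1) + ((n:ℝ)-q-i) = (-1) * ((q:ℝ) + j + 1 - n + i)))]
      rw [Finset.prod_mul_distrib, Finset.prod_const, Finset.card_range]
    have hR : Polynomial.eval (-((j:ℝ)+1)) (Rpoly q n)
        = gam q n j * ((-1)^j * (j.factorial : ℝ) * ((n-1-j).factorial : ℝ)) := by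
      rw [Rpoly, Polynomial.eval_finset_sum]
      rw [Finset.sum_eq_single j]
      · rw [Polynomial.eval_mul, Polynomial.eval_C, hevalprod, ← erase_prod j n hj]
        congr 1
        apply Finset.prod_congr rfl
        intro i _
        ring
      · intro m hm hmj
        rw [Polynomial.eval_mul, hevalprod]
        rw [Finset.prod_eq_zero (Finset.mem_erase.2 ⟨(Ne.symm hmj), Finset.mem_range.2 hj⟩)
          (by ring : -((j:ℝ)+1) + ((j:ℝ)+1) = 0)]
        ring
      · intro h
        exact absurd (Finset.mem_range.2 hj) h
    rw [hD, hN, hR, zero_sub, Ep_eq hn hqn j, gam]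
    have hsign : (-1:ℝ)^(n+1+j) * (-1)^j = (-1)^(n+1) := by
      rw [← pow_add, show n+1+j+j = (n+1)+2*j by ring, pow_add, pow_mul]
      norm_num
    have hfact : ((n-1).choose j : ℝ) * (j.factorial : ℝ) * ((n-1-j).factorial : ℝ)
        = ((n-1).factorial : ℝ) := by
      exact_mod_cast congrArg (fun t : ℕ => (t:ℝ))
        (Nat.choose_mul_factorial_mul_factorial (show j ≤ n-1 by omega))
    have hnfact : (n : ℝ) * ((n-1).factorial : ℝ) = (n.factorial : ℝ) := by
      exact_mod_cast congrArg (fun t : ℕ => (t:ℝ)) (Nat.mul_factorial_pred hn.ne')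
    calc -((-1:ℝ)^n * ((q.choose n : ℝ) * (n.factorial : ℝ) * sp q n j))
        = (-1:ℝ)^(n+1) * ((q.choose n : ℝ) * ((n:ℝ) * ((n-1).factorial : ℝ)) * sp q n j) := by
          rw [hnfact, pow_succ]; ring
      _ = (-1:ℝ)^(n+1) * ((q.choose n : ℝ) * ((n:ℝ) * (((n-1).choose j : ℝ) * (j.factorial : ℝ) * ((n-1-j).factorial : ℝ))) * sp q n j) := by
          rw [hfact]
      _ = _ := by rw [← hsign]; ring

open Polynomial in
lemma eval_prod_lin (x : ℝ) (s : Finset ℕ) (c : ℕ → ℝ) :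
    Polynomial.eval x (∏ i ∈ s, (X + C (c i))) = ∏ i ∈ s, (x + c i) := by
  rw [Polynomial.eval_prod]
  apply Finset.prod_congr rfl
  intro i _
  simp

theorem stmt12 (p q n : ℕ) (hn : 0 < n) (hqn : n ≤ q) :
    ∑ k ∈ Finset.range (n + 1), (-1 : ℝ) ^ k * (n.choose k : ℝ) *
        (((q + k).choose k : ℝ) / ((q - n + k).choose k : ℝ)) *
        ((q : ℝ) / ((q : ℝ) + k)) * Hr 1 (p + k) =
      (-1 : ℝ) ^ n / n * (1 / (q.choose n : ℝ)) *
        (1 - gbinomR ((p : ℝ) - q + n) n / ((p + n).choose n : ℝ)) := by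
  rw [lhs_eq p q n hn hqn]
  -- evaluate the polynomial identity at x = p
  have hmain := congrArg (Polynomial.eval (p:ℝ)) (poly_id hn hqn)
  rw [Polynomial.eval_sub, Dpoly, Npoly, Rpoly, eval_prod_lin, eval_prod_lin,
    Polynomial.eval_finset_sum] at hmain
  simp only [Polynomial.eval_mul, Polynomial.eval_C] at hmain
  rw [Finset.sum_congr rfl (fun m (_ : m ∈ Finset.range n) => by
    rw [eval_prod_lin] : ∀ m ∈ Finset.range n, _ = gam q n m * ∏ i ∈ (Finset.range n).erase m, ((p:ℝ) + ((i:ℝ)+1)))] at hmain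
  set Dp : ℝ := ∏ i ∈ Finset.range n, ((p:ℝ) + ((i:ℝ)+1)) with hDp
  have hDppos : 0 < Dp := Finset.prod_pos (fun i _ => by positivity)
  have hCn : (0:ℝ) < (q.choose n : ℝ) := by exact_mod_cast Nat.choose_pos hqn
  have hCpn : (0:ℝ) < ((p+n).choose n : ℝ) := by
    exact_mod_cast Nat.choose_pos (Nat.le_add_left n p)
  have hfact : (0:ℝ) < (n.factorial : ℝ) := by exact_mod_cast Nat.factorial_pos n
  have hNp : ∏ i ∈ Finset.range n, ((p:ℝ) + ((n:ℝ) - q - i))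
      = (n.factorial : ℝ) * gbinomR ((p : ℝ) - q + n) n := by
    rw [gbinomR]
    rw [show (n.factorial : ℝ) * ((∏ i ∈ Finset.range n, (((p:ℝ) - q + n) - i)) / (n.factorial : ℝ))
      = ∏ i ∈ Finset.range n, (((p:ℝ) - q + n) - i) by field_simp]
    apply Finset.prod_congr rfl
    intro i _
    ring
  have hchoose : ((p+n).choose n : ℝ) * (n.factorial : ℝ) = Dp := by
    rw [choose_prod p n, hDp]
    apply Finset.prod_congr rfl
    intro i _
    ring
  have hrhs : 1 - gbinomR ((p : ℝ) - q + n) n / ((p + n).choose n : ℝ)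
      = (∑ m ∈ Finset.range n, gam q n m * ∏ i ∈ (Finset.range n).erase m, ((p:ℝ) + ((i:ℝ)+1))) / Dp := by
    rw [← hmain, hNp]
    rw [eq_div_iff hDppos.ne', sub_mul, one_mul]
    have h5 : gbinomR ((p : ℝ) - q + n) n / ((p + n).choose n : ℝ) * Dp
        = (n.factorial : ℝ) * gbinomR ((p : ℝ) - q + n) n := by
      rw [← hchoose]
      field_simp
    rw [h5]
  rw [hrhs, Finset.sum_div, Finset.mul_sum, ← Finset.sum_neg_distrib]
  apply Finset.sum_congr rfl
  intro m hm
  simp only [Finset.mem_range] at hm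
  have hpm : ((p:ℝ) + m + 1) ≠ 0 := by positivity
  have herase : ((p:ℝ) + ((m:ℝ)+1)) * ∏ i ∈ (Finset.range n).erase m, ((p:ℝ) + ((i:ℝ)+1)) = Dp := by
    rw [hDp]
    exact Finset.mul_prod_erase _ (fun i : ℕ => (p:ℝ) + ((i:ℝ)+1)) (Finset.mem_range.2 hm)
  have heraseprod : (0:ℝ) < ∏ i ∈ (Finset.range n).erase m, ((p:ℝ) + ((i:ℝ)+1)) :=
    Finset.prod_pos (fun i _ => by positivity)
  have hsign : (-1:ℝ)^n * (-1:ℝ)^(n+1+m) = -(-1:ℝ)^m := by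
    rw [← pow_add, show n+(n+1+m) = 2*n+1+m by ring, pow_add, pow_add, pow_mul]
    norm_num
  rw [gam]
  have hnr : (n:ℝ) ≠ 0 := by positivity
  rw [← herase]
  field_simp
  linear_combination (-((((n-1).choose m : ℕ):ℝ) * sp q n m * ((p:ℝ)+(m:ℝ)+1))) * hsign
end

section
/- For nonnegative integers $p,q$ with $p\ge q\ge n$ and positive integer $n$, $\sum_{k=0}^n(-1)^k\binom{n}{k}\frac{\binom{q+k}{k}}{\binom{q-n+k}{k}}\frac{q}{q+k}H_{p+k}^{\langle3\rangle}=\frac{(-1)^n}{2n}\frac{\binom{p-q+n}{n}}{\binom{p+n}{n}\binom{q}{n}}\Big(\big[H_{p-q+n}^{\langle2\rangle}-H_{p+n}^{\langle2\rangle}-H_{p-q}^{\langle2\rangle}+H_p^{\langle2\rangle}\big]-\big[H_{p-q+n}-H_{p+n}-H_{p-q}+H_p\big]^2\Big)$. -/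
open Finset

noncomputable def rr (q n j : ℕ) : ℝ :=
  (-1)^(n+j) * n * ((n-1).choose j) * ((q+j).choose n)

lemma prod_cast_fact (m : ℕ) : ∀ n : ℕ,
    (∏ j ∈ range n, ((m:ℝ)+j+1)) * (m.factorial : ℝ) = ((m+n).factorial : ℝ)
  | 0 => by simp
  | (n+1) => by
    rw [prod_range_succ, mul_right_comm, prod_cast_fact m n, ← Nat.add_assoc,
      Nat.factorial_succ]
    push_cast
    ring

lemma choose_cast_prod (m n : ℕ) :
    ((m+n).choose n : ℝ) * (n.factorial : ℝ) = ∏ j ∈ range n, ((m:ℝ)+j+1) := by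
  have hm : (m.factorial : ℝ) ≠ 0 := by positivity
  apply mul_right_cancel₀ hm
  rw [prod_cast_fact m n, ← Nat.add_choose_mul_factorial_mul_factorial m n]
  push_cast
  ring

lemma rr_rec (q n j : ℕ) (hj : j < n) :
    ((n:ℝ) - j) * rr q (n+1) j = ((n:ℝ) - j - q) * rr q n j := by
  unfold rr
  simp only [Nat.add_sub_cancel]
  by_cases h : n ≤ q + j
  · have B' : n * (n-1).choose j = n.choose j * (n - j) := by
      have h1 := Nat.add_one_mul_choose_eq (n-1) j
      have hn1 : n - 1 + 1 = n := by omega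
      simp only [Nat.succ_eq_add_one, hn1] at h1
      exact h1.trans (Nat.choose_succ_right_eq n j)
    have A := Nat.choose_succ_right_eq (q+j) n
    have key : (n.choose j * (n - j)) * ((q+j).choose (n+1) * (n+1))
        = (n * (n-1).choose j) * ((q+j).choose n * (q+j-n)) := by
      rw [A, B']
    have keyR := congrArg (Nat.cast : ℕ → ℝ) key
    push_cast [Nat.cast_sub h, Nat.cast_sub hj.le] at keyR
    have hs : (-1:ℝ)^(n+1+j) = -(-1)^(n+j) := by
      rw [show n+1+j = (n+j)+1 from by ring, pow_succ]; ring
    rw [hs]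
    push_cast
    linear_combination -(-1:ℝ)^(n+j) * keyR
  · have h0 : (q+j).choose n = 0 := Nat.choose_eq_zero_of_lt (by omega)
    have h1 : (q+j).choose (n+1) = 0 := Nat.choose_eq_zero_of_lt (by omega)
    rw [h0, h1]; push_cast; ring

lemma pf (q : ℕ) : ∀ (n : ℕ) (x : ℝ), (∀ j < n, x + j + 1 ≠ 0) →
    ∏ j ∈ range n, ((x - q + j + 1)/(x + j + 1))
      = 1 + ∑ j ∈ range n, rr q n j / (x + j + 1)
  | 0, x, _ => by simp [rr]
  | (n+1), x, hx => by
    have hxn : x + (n:ℝ) + 1 ≠ 0 := hx n (by omega)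
    have IH := pf q n x (fun j hj => hx j (by omega))
    have IHs := pf q n (-((n:ℝ)+1)) (fun j hj => by
      have : ((j:ℝ)) < (n:ℝ) := by exact_mod_cast hj
      intro hc; nlinarith)
    -- evaluate the special product
    have hspec : (∏ j ∈ range n, ((-((n:ℝ)+1) - q + j + 1)/(-((n:ℝ)+1) + j + 1)))
        = ((q+n).choose n : ℝ) := by
      have h1 : ∀ j ∈ range n, ((-((n:ℝ)+1) - q + j + 1)/(-((n:ℝ)+1) + j + 1))
          = ((q:ℝ) + (n-1-j : ℕ) + 1)/(((n-1-j : ℕ) : ℝ) + 1) := by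
        intro j hj
        simp only [mem_range] at hj
        have hc : ((n-1-j : ℕ) : ℝ) = (n:ℝ) - 1 - j := by
          push_cast [Nat.cast_sub (by omega : j ≤ n - 1), Nat.cast_sub (by omega : 1 ≤ n)]
          ring
        rw [hc]
        have hne : -((n:ℝ)+1) + j + 1 ≠ 0 := by
          have : ((j:ℝ)) < (n:ℝ) := by exact_mod_cast hj
          intro hcc; nlinarith
        have hne2 : ((n:ℝ)) - 1 - j + 1 ≠ 0 := by
          have : ((j:ℝ)) < (n:ℝ) := by exact_mod_cast hj
          intro hcc; nlinarith
        rw [div_eq_div_iff hne hne2]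
        ring
      rw [prod_congr rfl h1, prod_range_reflect (fun j => ((q:ℝ) + j + 1)/((j:ℝ)+1)) n]
      rw [prod_div_distrib]
      have e1 := choose_cast_prod q n
      have e2 : (∏ j ∈ range n, ((j:ℝ)+1)) = (n.factorial : ℝ) := by
        have := (choose_cast_prod 0 n).symm
        simpa using this
      have hnf : (n.factorial : ℝ) ≠ 0 := by positivity
      rw [e2, ← e1, mul_div_assoc, div_self hnf, mul_one]
    rw [hspec] at IHs
    -- from IHs : C(q+n,n) = 1 + Σ c_j / (-(n+1)+j+1)
    have hsum : ∑ j ∈ range n, rr q n j / ((n:ℝ) - j) = 1 - ((q+n).choose n : ℝ) := by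
      have : ∀ j ∈ range n, rr q n j / (-((n:ℝ)+1) + j + 1) = -(rr q n j / ((n:ℝ) - j)) := by
        intro j hj
        simp only [mem_range] at hj
        have : ((j:ℝ)) < (n:ℝ) := by exact_mod_cast hj
        rw [show -((n:ℝ)+1) + j + 1 = -((n:ℝ) - j) by ring, div_neg]
      rw [sum_congr rfl this, sum_neg_distrib] at IHs
      linarith [IHs]
    have hfac : (x - (q:ℝ) + n + 1)/(x + n + 1) = 1 - q/(x+n+1) := by
      field_simp
      ring
    have hterm : ∀ j ∈ range n, rr q n j / (x+j+1) * (1 - (q:ℝ)/(x+n+1))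
        = rr q (n+1) j / (x+j+1) + ((q:ℝ) * rr q n j / ((n:ℝ)-j)) / (x+n+1) := by
      intro j hj
      simp only [mem_range] at hj
      have hj1 : x + j + 1 ≠ 0 := hx j (by omega)
      have hjn : ((j:ℝ)) < (n:ℝ) := by exact_mod_cast hj
      have hnj : (n:ℝ) - j ≠ 0 := by intro hc; nlinarith
      have hr := rr_rec q n j hj
      have hr' : rr q (n+1) j = ((n:ℝ) - j - q)/((n:ℝ)-j) * rr q n j := by
        rw [div_mul_eq_mul_div, eq_div_iff hnj]
        linarith [hr]
      rw [hr']
      field_simp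
      ring
    have hlast : rr q (n+1) n = -((q:ℝ) * ((q+n).choose n : ℝ)) := by
      unfold rr
      simp only [Nat.add_sub_cancel, Nat.choose_self]
      have h1 : (q+n).choose (n+1) * (n+1) = (q+n).choose n * q := by
        have := Nat.choose_succ_right_eq (q+n) n
        simpa using this
      have h2 : (-1:ℝ)^(n+1+n) = -1 := by
        have ho : Odd (n+1+n) := ⟨n, by ring⟩
        exact ho.neg_one_pow
      rw [h2]
      have hc := congrArg (Nat.cast : ℕ → ℝ) h1
      push_cast at hc ⊢
      linear_combination (-1 : ℝ) * hc
    calc ∏ j ∈ range (n+1), ((x - q + j + 1)/(x + j + 1))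
        = (1 + ∑ j ∈ range n, rr q n j / (x+j+1)) * (1 - (q:ℝ)/(x+n+1)) := by
          rw [prod_range_succ, IH, hfac]
      _ = (1 - (q:ℝ)/(x+n+1)) + ∑ j ∈ range n, rr q n j/(x+j+1) * (1 - (q:ℝ)/(x+n+1)) := by
          rw [add_mul, one_mul, sum_mul]
      _ = (1 - (q:ℝ)/(x+n+1)) + ∑ j ∈ range n, (rr q (n+1) j / (x+j+1)
            + ((q:ℝ) * rr q n j / ((n:ℝ)-j)) / (x+n+1)) := by
          rw [sum_congr rfl hterm]
      _ = 1 + ∑ j ∈ range (n+1), rr q (n+1) j / (x+j+1) := by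
          rw [sum_add_distrib, sum_range_succ, hlast]
          have h3 : ∑ j ∈ range n, ((q:ℝ) * rr q n j / ((n:ℝ)-j)) / (x+n+1)
              = ((q:ℝ) * (1 - ((q+n).choose n : ℝ))) / (x+n+1) := by
            rw [← sum_div]
            congr 1
            have hstep : ∀ j ∈ range n, (q:ℝ) * rr q n j / ((n:ℝ)-j)
                = (q:ℝ) * (rr q n j / ((n:ℝ)-j)) := fun j _ => by ring
            rw [sum_congr rfl hstep, ← mul_sum, hsum]
          rw [h3]
          field_simp
          ring

lemma hasDerivAt_inv_shift (c x : ℝ) (h : x + c ≠ 0) :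
    HasDerivAt (fun y : ℝ => (y + c)⁻¹) (-(((x + c)^2)⁻¹)) x := by
  have h1 : HasDerivAt (fun y : ℝ => y + c) 1 x := (hasDerivAt_id x).add_const c
  have := h1.fun_inv h
  refine this.congr_deriv ?_
  field_simp

lemma hasDerivAt_inv_sq_shift (c x : ℝ) (h : x + c ≠ 0) :
    HasDerivAt (fun y : ℝ => ((y + c)^2)⁻¹) (-(2 * ((x + c)^3)⁻¹)) x := by
  have h1 : HasDerivAt (fun y : ℝ => y + c) 1 x := (hasDerivAt_id x).add_const c
  have h2 : HasDerivAt (fun y : ℝ => (y + c)^2) (2 * (x + c)) x := by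
    have := h1.fun_pow 2
    refine this.congr_deriv ?_
    ring
  have := h2.fun_inv (pow_ne_zero 2 h)
  refine this.congr_deriv ?_
  field_simp

lemma hasDerivAt_quot (a c x : ℝ) (h : x + c ≠ 0) :
    HasDerivAt (fun y : ℝ => (y - a + c)/(y + c)) ((a) / (x + c)^2) x := by
  have h1 : HasDerivAt (fun y : ℝ => y - a + c) 1 x := by
    simpa using ((hasDerivAt_id x).sub_const a).add_const c
  have h2 : HasDerivAt (fun y : ℝ => y + c) 1 x := (hasDerivAt_id x).add_const c
  have := h1.fun_div h2 h
  refine this.congr_deriv ?_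
  field_simp
  ring

lemma hasDerivAt_of_eq {f g : ℝ → ℝ} {A B : ℝ} {x : ℝ} (h : HasDerivAt g A x)
    (h1 : ∀ y, f y = g y) (h2 : B = A) :
    HasDerivAt f B x := by
  subst h2
  exact h.congr_of_eventuallyEq (Filter.Eventually.of_forall h1)

lemma key_deriv (q n : ℕ) (p : ℝ) (hp : (q:ℝ) - 1 < p) :
    2 * ∑ j ∈ range n, rr q n j / (p+j+1)^3
      = (∏ j ∈ range n, ((p - q + j + 1)/(p + j + 1))) *
        ((∑ j ∈ range n, (1/(p - (q:ℝ) + j+1) - 1/(p+j+1)))^2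
          + ∑ j ∈ range n, (1/(p+j+1)^2 - 1/(p - (q:ℝ) + j+1)^2)) := by
  set S : Set ℝ := Set.Ioi ((q:ℝ)-1) with hSdef
  have hS : IsOpen S := isOpen_Ioi
  have hpS : p ∈ S := hp
  have hq0 : (0:ℝ) ≤ (q:ℝ) := Nat.cast_nonneg q
  have hpos : ∀ x ∈ S, ∀ j : ℕ, 0 < x + j + 1 := by
    intro x hx j
    have h1 : (q:ℝ) - 1 < x := hx
    have h2 : (0:ℝ) ≤ (j:ℝ) := Nat.cast_nonneg j
    nlinarith
  have hpos2 : ∀ x ∈ S, ∀ j : ℕ, 0 < x - q + j + 1 := by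
    intro x hx j
    have h1 : (q:ℝ) - 1 < x := hx
    have h2 : (0:ℝ) ≤ (j:ℝ) := Nat.cast_nonneg j
    nlinarith
  have hden : ∀ (x : ℝ) (j : ℕ), HasDerivAt (fun y : ℝ => y + j + 1) 1 x :=
    fun x j => ((hasDerivAt_id x).add_const _).add_const _
  have hnum : ∀ (x : ℝ) (j : ℕ), HasDerivAt (fun y : ℝ => y - q + j + 1) 1 x :=
    fun x j => (((hasDerivAt_id x).sub_const _).add_const _).add_const _
  -- derivative of F
  have hFd : ∀ x ∈ S, HasDerivAt (fun y : ℝ => ∏ j ∈ range n, ((y - q + j + 1)/(y + j + 1)))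
      ((∏ j ∈ range n, ((x - q + j + 1)/(x + j + 1)))
        * ∑ j ∈ range n, (1/(x - (q:ℝ) + j+1) - 1/(x+j+1))) x := by
    intro x hx
    have h := HasDerivAt.fun_finsetProd (u := range n) (x := x)
      (f := fun j (y:ℝ) => (y - q + j + 1)/(y + j + 1))
      (f' := fun j => (q:ℝ) / (x + j + 1)^2)
      (fun j _ => hasDerivAt_of_eq ((hnum x j).div (hden x j) (hpos x hx j).ne')
        (fun y => rfl) (by ring))
    have heq : ∑ j ∈ range n, (∏ i ∈ (range n).erase j, ((x - q + i + 1)/(x + i + 1)))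
          • ((q:ℝ) / (x + j + 1)^2)
        = (∏ j ∈ range n, ((x - q + j + 1)/(x + j + 1)))
            * ∑ j ∈ range n, (1/(x - (q:ℝ) + j+1) - 1/(x+j+1)) := by
      rw [mul_sum]
      apply sum_congr rfl
      intro j hj
      have hu : x - (q:ℝ) + j + 1 ≠ 0 := (hpos2 x hx j).ne'
      have hv : x + (j:ℝ) + 1 ≠ 0 := (hpos x hx j).ne'
      have hfj : (x - q + j + 1)/(x + j + 1) ≠ 0 := div_ne_zero hu hv
      have hprod : (x - (q:ℝ) + j + 1)/(x + j + 1)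
            * ∏ i ∈ (range n).erase j, ((x - q + i + 1)/(x + i + 1))
          = ∏ i ∈ range n, ((x - q + i + 1)/(x + i + 1)) :=
        Finset.mul_prod_erase (range n) (fun i => ((x - q + i + 1)/(x + i + 1))) hj
      rw [smul_eq_mul, ← hprod]
      have key : (q:ℝ)/(x+j+1)^2
          = ((x - q + j + 1)/(x + j + 1)) * (1/(x-(q:ℝ)+j+1) - 1/(x+j+1)) := by
        field_simp
        ring
      rw [key]
      ring
    rw [heq] at h
    exact h
  -- derivative of G
  have hGd : ∀ x ∈ S, HasDerivAt (fun y : ℝ => 1 + ∑ j ∈ range n, rr q n j / (y + j + 1))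
      (∑ j ∈ range n, rr q n j * (-1 / (x + j + 1)^2)) x := by
    intro x hx
    apply HasDerivAt.const_add
    apply HasDerivAt.fun_sum
    intro j _
    exact hasDerivAt_of_eq (((hden x j).fun_inv (hpos x hx j).ne').const_mul (rr q n j))
      (fun y => by ring) rfl
  -- derivative of L
  have hLd : ∀ x ∈ S, HasDerivAt
      (fun y : ℝ => ∑ j ∈ range n, (1/(y - (q:ℝ) + j+1) - 1/(y+j+1)))
      (∑ j ∈ range n, (1/(x+j+1)^2 - 1/(x - (q:ℝ) + j+1)^2)) x := by
    intro x hx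
    apply HasDerivAt.fun_sum
    intro j _
    refine hasDerivAt_of_eq
      (((hnum x j).fun_inv (hpos2 x hx j).ne').fun_sub ((hden x j).fun_inv (hpos x hx j).ne'))
      (fun y => by ring) ?_
    have hu : x - (q:ℝ) + j + 1 ≠ 0 := (hpos2 x hx j).ne'
    have hv : x + (j:ℝ) + 1 ≠ 0 := (hpos x hx j).ne'
    field_simp
    ring
  -- derivative of G1
  have hG1d : HasDerivAt (fun y : ℝ => ∑ j ∈ range n, rr q n j * (-1 / (y + j + 1)^2))
      (∑ j ∈ range n, 2 * rr q n j / (p+j+1)^3) p := by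
    apply HasDerivAt.fun_sum
    intro j _
    have hv : p + (j:ℝ) + 1 ≠ 0 := (hpos p hpS j).ne'
    refine hasDerivAt_of_eq
      ((((hden p j).fun_pow 2).fun_inv (pow_ne_zero 2 hv)).const_mul (-(rr q n j)))
      (fun y => by ring) ?_
    field_simp
    ring
  -- F = G on S
  have hFG : ∀ x ∈ S, (fun y : ℝ => ∏ j ∈ range n, ((y - q + j + 1)/(y + j + 1))) x
      = (fun y : ℝ => 1 + ∑ j ∈ range n, rr q n j / (y + j + 1)) x := by
    intro x hx
    exact pf q n x (fun j _ => (hpos x hx j).ne')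
  -- F*L eventually equals G1
  have hev : (fun x : ℝ => (∏ j ∈ range n, ((x - q + j + 1)/(x + j + 1)))
        * ∑ j ∈ range n, (1/(x - (q:ℝ) + j+1) - 1/(x+j+1)))
      =ᶠ[nhds p] (fun x : ℝ => ∑ j ∈ range n, rr q n j * (-1 / (x + j + 1)^2)) := by
    filter_upwards [hS.mem_nhds hpS] with x hx
    have e1 := (hFd x hx).deriv
    have e2 := (hGd x hx).deriv
    have e3 : (fun y : ℝ => ∏ j ∈ range n, ((y - q + j + 1)/(y + j + 1)))
        =ᶠ[nhds x] (fun y : ℝ => 1 + ∑ j ∈ range n, rr q n j / (y + j + 1)) := by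
      filter_upwards [hS.mem_nhds hx] with y hy
      exact hFG y hy
    rw [← e1, ← e2, e3.deriv_eq]
  -- differentiate both sides at p
  have hFL : HasDerivAt (fun x : ℝ => (∏ j ∈ range n, ((x - q + j + 1)/(x + j + 1)))
        * ∑ j ∈ range n, (1/(x - (q:ℝ) + j+1) - 1/(x+j+1)))
      ((∏ j ∈ range n, ((p - q + j + 1)/(p + j + 1)))
          * (∑ j ∈ range n, (1/(p - (q:ℝ) + j+1) - 1/(p+j+1)))^2
        + (∏ j ∈ range n, ((p - q + j + 1)/(p + j + 1)))
          * ∑ j ∈ range n, (1/(p+j+1)^2 - 1/(p - (q:ℝ) + j+1)^2)) p := by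
    have := (hFd p hpS).mul (hLd p hpS)
    refine hasDerivAt_of_eq this (fun y => rfl) (by ring)
  have e4 := hev.deriv_eq
  rw [hFL.deriv, hG1d.deriv] at e4
  have e5 : ∑ j ∈ range n, 2 * rr q n j / (p+j+1)^3
      = 2 * ∑ j ∈ range n, rr q n j / (p+j+1)^3 := by
    rw [mul_sum]
    exact sum_congr rfl (fun j _ => by ring)
  rw [e5] at e4
  linear_combination -e4

lemma weight_eq (m d k : ℕ) :
    (((m+1+d+k).choose k : ℝ) / ((d+k).choose k : ℝ)) * (((m:ℝ)+1+d) / ((m:ℝ)+1+d+k))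
      = ((m+d+k).choose m : ℝ) / ((m+d).choose m : ℝ) := by
  have h1 : ((m+1+d+k).choose k : ℝ)
      = ((m+1+d+k).factorial : ℝ) / ((k.factorial : ℝ) * ((m+1+d).factorial : ℝ)) := by
    rw [Nat.cast_choose ℝ (by omega : k ≤ m+1+d+k), show m+1+d+k-k = m+1+d from by omega]
  have h2 : ((d+k).choose k : ℝ)
      = ((d+k).factorial : ℝ) / ((k.factorial : ℝ) * (d.factorial : ℝ)) := by
    rw [Nat.cast_choose ℝ (by omega : k ≤ d+k), show d+k-k = d from by omega]
  have h3 : ((m+d+k).choose m : ℝ)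
      = ((m+d+k).factorial : ℝ) / ((m.factorial : ℝ) * ((d+k).factorial : ℝ)) := by
    rw [Nat.cast_choose ℝ (by omega : m ≤ m+d+k), show m+d+k-m = d+k from by omega]
  have h4 : ((m+d).choose m : ℝ)
      = ((m+d).factorial : ℝ) / ((m.factorial : ℝ) * (d.factorial : ℝ)) := by
    rw [Nat.cast_choose ℝ (by omega : m ≤ m+d), show m+d-m = d from by omega]
  have hf1 : ((m+1+d+k).factorial : ℝ) = ((m:ℝ)+1+d+k) * ((m+d+k).factorial : ℝ) := by
    rw [show m+1+d+k = (m+d+k)+1 from by omega, Nat.factorial_succ]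
    push_cast; ring
  have hf2 : ((m+1+d).factorial : ℝ) = ((m:ℝ)+1+d) * ((m+d).factorial : ℝ) := by
    rw [show m+1+d = (m+d)+1 from by omega, Nat.factorial_succ]
    push_cast; ring
  have n1 : (k.factorial : ℝ) ≠ 0 := by positivity
  have n2 : (d.factorial : ℝ) ≠ 0 := by positivity
  have n3 : (m.factorial : ℝ) ≠ 0 := by positivity
  have n4 : ((m+d+k).factorial : ℝ) ≠ 0 := by positivity
  have n5 : ((m+d).factorial : ℝ) ≠ 0 := by positivity
  have n6 : ((d+k).factorial : ℝ) ≠ 0 := by positivity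
  have n7 : ((m:ℝ)+1+d+k) ≠ 0 := by positivity
  have n8 : ((m:ℝ)+1+d) ≠ 0 := by positivity
  rw [h1, h2, h3, h4, hf1, hf2]
  field_simp

lemma NIDR (m d j : ℕ) (hj : j ≤ m) :
    ((m:ℝ)+1) * (((m.choose (j+1)) : ℝ) * ((m+d+j+2).choose (m+1) : ℝ)
        + ((m.choose j) : ℝ) * ((m+d+j+1).choose (m+1) : ℝ))
      = ((m:ℝ)+1+d) * ((m+1).choose (j+1) : ℝ) * ((m+d+j+1).choose m : ℝ) := by
  rcases eq_or_lt_of_le hj with heq | hlt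
  · subst heq
    have h0 : j.choose (j+1) = 0 := Nat.choose_eq_zero_of_lt (by omega)
    have key : (j+d+j+1).choose (j+1) * (j+1) = (j+d+j+1).choose j * (j+d+j+1-j) :=
      Nat.choose_succ_right_eq (j+d+j+1) j
    rw [show j+d+j+1-j = j+d+1 from by omega] at key
    have keyR := congrArg (Nat.cast : ℕ → ℝ) key
    push_cast at keyR
    rw [h0]
    push_cast [Nat.choose_self]
    linear_combination keyR
  · obtain ⟨s, rfl⟩ : ∃ s, m = j+1+s := ⟨m-j-1, by omega⟩
    have h1 : ((j+1+s).choose (j+1) : ℝ)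
        = ((j+1+s).factorial : ℝ) / (((j+1).factorial : ℝ) * (s.factorial : ℝ)) := by
      rw [Nat.cast_choose ℝ (by omega : j+1 ≤ j+1+s), show j+1+s-(j+1) = s from by omega]
    have h2 : ((j+1+s).choose j : ℝ)
        = ((j+1+s).factorial : ℝ) / ((j.factorial : ℝ) * ((s+1).factorial : ℝ)) := by
      rw [Nat.cast_choose ℝ (by omega : j ≤ j+1+s), show j+1+s-j = s+1 from by omega]
    have h3 : ((j+1+s+1).choose (j+1) : ℝ)
        = ((j+1+s+1).factorial : ℝ) / (((j+1).factorial : ℝ) * ((s+1).factorial : ℝ)) := by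
      rw [Nat.cast_choose ℝ (by omega : j+1 ≤ j+1+s+1), show j+1+s+1-(j+1) = s+1 from by omega]
    have h4 : ((j+1+s+d+j+2).choose (j+1+s+1) : ℝ)
        = ((j+1+s+d+j+2).factorial : ℝ)
            / (((j+1+s+1).factorial : ℝ) * ((d+j+1).factorial : ℝ)) := by
      rw [Nat.cast_choose ℝ (by omega : j+1+s+1 ≤ j+1+s+d+j+2),
        show j+1+s+d+j+2-(j+1+s+1) = d+j+1 from by omega]
    have h5 : ((j+1+s+d+j+1).choose (j+1+s+1) : ℝ)
        = ((j+1+s+d+j+1).factorial : ℝ)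
            / (((j+1+s+1).factorial : ℝ) * ((d+j).factorial : ℝ)) := by
      rw [Nat.cast_choose ℝ (by omega : j+1+s+1 ≤ j+1+s+d+j+1),
        show j+1+s+d+j+1-(j+1+s+1) = d+j from by omega]
    have h6 : ((j+1+s+d+j+1).choose (j+1+s) : ℝ)
        = ((j+1+s+d+j+1).factorial : ℝ)
            / (((j+1+s).factorial : ℝ) * ((d+j+1).factorial : ℝ)) := by
      rw [Nat.cast_choose ℝ (by omega : j+1+s ≤ j+1+s+d+j+1),
        show j+1+s+d+j+1-(j+1+s) = d+j+1 from by omega]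
    have hf1 : ((j+1+s+d+j+2).factorial : ℝ)
        = ((j:ℝ)+1+s+d+j+2) * ((j+1+s+d+j+1).factorial : ℝ) := by
      rw [show j+1+s+d+j+2 = (j+1+s+d+j+1)+1 from by omega, Nat.factorial_succ]
      push_cast; ring
    have hf2 : (((j+1).factorial : ℝ)) = ((j:ℝ)+1) * (j.factorial : ℝ) := by
      rw [Nat.factorial_succ]; push_cast; ring
    have hf3 : (((s+1).factorial : ℝ)) = ((s:ℝ)+1) * (s.factorial : ℝ) := by
      rw [Nat.factorial_succ]; push_cast; ring
    have hf4 : (((j+1+s+1).factorial : ℝ)) = ((j:ℝ)+1+s+1) * ((j+1+s).factorial : ℝ) := by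
      rw [Nat.factorial_succ]; push_cast; ring
    have hf5 : (((d+j+1).factorial : ℝ)) = ((d:ℝ)+j+1) * ((d+j).factorial : ℝ) := by
      rw [Nat.factorial_succ]; push_cast; ring
    have n1 : (j.factorial : ℝ) ≠ 0 := by positivity
    have n2 : (s.factorial : ℝ) ≠ 0 := by positivity
    have n3 : ((j+1+s).factorial : ℝ) ≠ 0 := by positivity
    have n4 : ((j+1+s+d+j+1).factorial : ℝ) ≠ 0 := by positivity
    have n5 : ((d+j).factorial : ℝ) ≠ 0 := by positivity
    have n6 : ((j:ℝ)+1) ≠ 0 := by positivity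
    have n7 : ((s:ℝ)+1) ≠ 0 := by positivity
    have n8 : ((j:ℝ)+1+s+1) ≠ 0 := by positivity
    have n9 : ((d:ℝ)+j+1) ≠ 0 := by positivity
    rw [h1, h2, h3, h4, h5, h6, hf1, hf2, hf3, hf4, hf5]
    push_cast
    field_simp
    ring

lemma AIDR (m d : ℕ) :
    ((m:ℝ)+1) * ((m+1+d).choose (m+1) : ℝ) = ((m:ℝ)+1+d) * ((m+d).choose m : ℝ) := by
  have h := Nat.add_one_mul_choose_eq (m+d) m
  have hR := congrArg (Nat.cast : ℕ → ℝ) h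
  push_cast at hR
  rw [show m+1+d = m+d+1 from by omega]
  push_cast
  linear_combination -hR

lemma tau_closed (m d : ℕ) : ∀ j, j ≤ m+1 →
    ∑ k ∈ range (j+1),
        (-1:ℝ)^k * ((m+1).choose k : ℝ) * ((m+d+k).choose m : ℝ) / ((m+d).choose m : ℝ)
      = (-1:ℝ)^j * (m.choose j : ℝ) * ((m+1+d+j).choose (m+1) : ℝ)
          / ((m+1+d).choose (m+1) : ℝ) := by
  have c2 : ((m+d).choose m : ℝ) ≠ 0 := by
    have := Nat.choose_pos (show m ≤ m+d by omega)
    positivity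
  have c1 : ((m+1+d).choose (m+1) : ℝ) ≠ 0 := by
    have := Nat.choose_pos (show m+1 ≤ m+1+d by omega)
    positivity
  intro j
  induction j with
  | zero =>
    intro _
    simp [div_self c2, div_self c1]
  | succ j ih =>
    intro hj
    rw [sum_range_succ, ih (by omega)]
    rw [show m+d+(j+1) = m+d+j+1 from by omega, show m+1+d+(j+1) = m+d+j+2 from by omega,
      show m+1+d+j = m+d+j+1 from by omega]
    have nid := NIDR m d j (by omega)
    have aid := AIDR m d
    have hm1 : ((m:ℝ)+1) ≠ 0 := by positivity
    have key : ((m+d).choose m : ℝ) * ((m.choose (j+1) : ℝ) * ((m+d+j+2).choose (m+1) : ℝ)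
          + (m.choose j : ℝ) * ((m+d+j+1).choose (m+1) : ℝ))
        = ((m+1+d).choose (m+1) : ℝ) * (((m+1).choose (j+1) : ℝ) * ((m+d+j+1).choose m : ℝ)) := by
      apply mul_left_cancel₀ hm1
      linear_combination ((m+d).choose m : ℝ) * nid
        - (((m+1).choose (j+1) : ℝ) * ((m+d+j+1).choose m : ℝ)) * aid
    rw [pow_succ]
    field_simp
    linear_combination key

lemma Hr_split (l a k : ℕ) :
    Hr l (a+k) = Hr l a + ∑ j ∈ range k, 1/((a:ℝ)+j+1)^l := by
  unfold Hr
  rw [Finset.sum_range_add]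
  congr 1
  apply sum_congr rfl
  intro j _
  push_cast
  ring

lemma sum_swap_tri (F : ℕ → ℕ → ℝ) : ∀ N, ∑ k ∈ range N, ∑ i ∈ range k, F i k
    = ∑ i ∈ range N, ∑ k ∈ Ico (i+1) N, F i k
  | 0 => by simp
  | (N+1) => by
    rw [sum_range_succ, sum_swap_tri F N, sum_range_succ]
    rw [show Ico (N+1) (N+1) = ∅ from Ico_self (N+1), sum_empty, add_zero]
    rw [← sum_add_distrib]
    apply sum_congr rfl
    intro i hi
    simp only [mem_range] at hi
    exact (Finset.sum_Ico_succ_top (by omega : i+1 ≤ N) (fun k => F i k)).symm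

theorem stmt14 (p q n : ℕ) (hn : 0 < n) (hqn : n ≤ q) (hpq : q ≤ p) :
    ∑ k ∈ Finset.range (n + 1), (-1 : ℝ) ^ k * (n.choose k : ℝ) *
        (((q + k).choose k : ℝ) / ((q - n + k).choose k : ℝ)) *
        ((q : ℝ) / ((q : ℝ) + k)) * Hr 3 (p + k) =
      (-1 : ℝ) ^ n / (2 * n) *
        (((p - q + n).choose n : ℝ) / (((p + n).choose n : ℝ) * (q.choose n : ℝ))) *
        ((Hr 2 (p - q + n) - Hr 2 (p + n) - Hr 2 (p - q) + Hr 2 p) -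
          (Hr 1 (p - q + n) - Hr 1 (p + n) - Hr 1 (p - q) + Hr 1 p) ^ 2) := by
  obtain ⟨m, rfl⟩ : ∃ m, n = m+1 := ⟨n-1, by omega⟩
  obtain ⟨d, rfl⟩ : ∃ d, q = m+1+d := ⟨q-(m+1), by omega⟩
  obtain ⟨e, rfl⟩ : ∃ e, p = m+1+d+e := ⟨p-(m+1+d), by omega⟩
  clear hn hqn hpq
  simp only [show m+1+d-(m+1) = d from by omega, show m+1+d+e-(m+1+d) = e from by omega]
  have hT : ((m+1+d).choose (m+1) : ℝ) ≠ 0 := by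
    have := Nat.choose_pos (show m+1 ≤ m+1+d by omega)
    positivity
  have hSne : ((m+d).choose m : ℝ) ≠ 0 := by
    have := Nat.choose_pos (show m ≤ m+d by omega)
    positivity
  have hp : ((m+1+d : ℕ) : ℝ) - 1 < ((m+1+d+e : ℕ) : ℝ) := by
    have : ((m+1+d : ℕ) : ℝ) ≤ ((m+1+d+e : ℕ) : ℝ) := Nat.cast_le.mpr (by omega)
    linarith
  have kd := key_deriv (m+1+d) (m+1) ((m+1+d+e : ℕ) : ℝ) hp
  -- abbreviations
  set P : ℝ := ((m+1+d+e : ℕ) : ℝ) with hPdef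
  set T : ℝ := ((m+1+d).choose (m+1) : ℝ) with hTdef
  -- Step A : rewrite the summand weights
  have stepA : ∑ k ∈ Finset.range (m+1+1), (-1 : ℝ) ^ k * ((m+1).choose k : ℝ) *
        (((m+1+d + k).choose k : ℝ) / ((d + k).choose k : ℝ)) *
        (((m+1+d : ℕ) : ℝ) / (((m+1+d : ℕ) : ℝ) + k)) * Hr 3 (m+1+d+e + k)
      = ∑ k ∈ range (m+1+1), ((-1:ℝ)^k * ((m+1).choose k : ℝ)
          * ((m+d+k).choose m : ℝ) / ((m+d).choose m : ℝ)) * Hr 3 (m+1+d+e+k) := by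
    apply sum_congr rfl
    intro k _
    push_cast
    linear_combination (((-1:ℝ)^k * ((m+1).choose k : ℝ)) * Hr 3 (m+1+d+e+k)) * weight_eq m d k
  rw [stepA]
  -- Step B : split Hr and rearrange
  have stepB : ∑ k ∈ range (m+1+1), ((-1:ℝ)^k * ((m+1).choose k : ℝ)
          * ((m+d+k).choose m : ℝ) / ((m+d).choose m : ℝ)) * Hr 3 (m+1+d+e+k)
      = ∑ i ∈ range (m+1+1),
          (∑ k ∈ Ico (i+1) (m+1+1), ((-1:ℝ)^k * ((m+1).choose k : ℝ)
            * ((m+d+k).choose m : ℝ) / ((m+d).choose m : ℝ))) * (1/(P+i+1)^3)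
        + (∑ k ∈ range (m+1+1), ((-1:ℝ)^k * ((m+1).choose k : ℝ)
            * ((m+d+k).choose m : ℝ) / ((m+d).choose m : ℝ))) * Hr 3 (m+1+d+e) := by
    have h1 : ∀ k ∈ range (m+1+1), ((-1:ℝ)^k * ((m+1).choose k : ℝ)
          * ((m+d+k).choose m : ℝ) / ((m+d).choose m : ℝ)) * Hr 3 (m+1+d+e+k)
        = ((-1:ℝ)^k * ((m+1).choose k : ℝ)
          * ((m+d+k).choose m : ℝ) / ((m+d).choose m : ℝ)) * Hr 3 (m+1+d+e)
          + ∑ j ∈ range k, ((-1:ℝ)^k * ((m+1).choose k : ℝ)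
          * ((m+d+k).choose m : ℝ) / ((m+d).choose m : ℝ)) * (1/(P+j+1)^3) := by
      intro k _
      rw [Hr_split 3 (m+1+d+e) k, mul_add, mul_sum]
    rw [sum_congr rfl h1, sum_add_distrib, ← sum_mul]
    rw [sum_swap_tri (fun i k => ((-1:ℝ)^k * ((m+1).choose k : ℝ)
          * ((m+d+k).choose m : ℝ) / ((m+d).choose m : ℝ)) * (1/(P+i+1)^3)) (m+1+1)]
    rw [add_comm]
    congr 1
    apply sum_congr rfl
    intro i _
    rw [← sum_mul]
  rw [stepB]
  -- total sum vanishes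
  have tau := tau_closed m d
  have total : ∑ k ∈ range (m+1+1), ((-1:ℝ)^k * ((m+1).choose k : ℝ)
        * ((m+d+k).choose m : ℝ) / ((m+d).choose m : ℝ)) = 0 := by
    rw [tau (m+1) le_rfl, Nat.choose_eq_zero_of_lt (by omega : m < m+1)]
    simp
  rw [total, zero_mul, add_zero]
  -- Ico sums via tau
  have stepC : ∀ i ∈ range (m+1+1),
      (∑ k ∈ Ico (i+1) (m+1+1), ((-1:ℝ)^k * ((m+1).choose k : ℝ)
        * ((m+d+k).choose m : ℝ) / ((m+d).choose m : ℝ))) * (1/(P+i+1)^3)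
      = -(((-1:ℝ)^i * (m.choose i : ℝ) * ((m+1+d+i).choose (m+1) : ℝ) / T) * (1/(P+i+1)^3)) := by
    intro i hi
    simp only [mem_range] at hi
    rw [Finset.sum_Ico_eq_sub _ (by omega : i+1 ≤ m+1+1), total, tau i (by omega)]
    ring
  rw [sum_congr rfl stepC]
  -- express via rr and use kd
  have hrr : ∀ i ∈ range (m+1), -(((-1:ℝ)^i * (m.choose i : ℝ)
        * ((m+1+d+i).choose (m+1) : ℝ) / T) * (1/(P+i+1)^3))
      = ((-1:ℝ)^m / (((m:ℝ)+1) * T)) * (rr (m+1+d) (m+1) i / (P+i+1)^3) := by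
    intro i _
    unfold rr
    simp only [Nat.add_sub_cancel]
    have hsg : (-1:ℝ)^(m+1+i) = -((-1:ℝ)^m * (-1)^i) := by
      rw [pow_add, pow_succ]
      ring
    rw [hsg]
    have hm1 : ((m:ℝ)+1) ≠ 0 := by positivity
    push_cast
    have hmm : (-1:ℝ)^m * (-1:ℝ)^m = 1 := by
      rw [← pow_add]
      exact Even.neg_one_pow ⟨m, rfl⟩
    field_simp
    linear_combination (((m.choose i : ℕ) : ℝ)
      * (((m+1+d+i).choose (m+1) : ℕ) : ℝ) / (P+(i:ℝ)+1)^3) * hmm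
  rw [sum_range_succ]
  rw [Nat.choose_eq_zero_of_lt (by omega : m < m+1)]
  rw [sum_congr rfl hrr, ← mul_sum]
  have hsum3 : ∑ i ∈ range (m+1), rr (m+1+d) (m+1) i / (P+i+1)^3
      = (1/2) * ((∏ j ∈ range (m + 1), (P - ↑(m + 1 + d) + ↑j + 1) / (P + ↑j + 1)) *
      ((∑ j ∈ range (m + 1), (1 / (P - ↑(m + 1 + d) + ↑j + 1) - 1 / (P + ↑j + 1))) ^ 2 +
        ∑ j ∈ range (m + 1), (1 / (P + ↑j + 1) ^ 2 - 1 / (P - ↑(m + 1 + d) + ↑j + 1) ^ 2))) := by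
    linear_combination (1/2 : ℝ) * kd
  rw [hsum3]
  have hDD : ((((m+1+d+e)+(m+1)).choose (m+1) : ℕ) : ℝ) ≠ 0 := by
    have := Nat.choose_pos (show m+1 ≤ (m+1+d+e)+(m+1) by omega)
    positivity
  have hfne : (((m+1).factorial : ℕ) : ℝ) ≠ 0 := by positivity
  have hPe : P - ((m+1+d : ℕ) : ℝ) = (e:ℝ) := by
    rw [hPdef]; push_cast; ring
  rw [Hr_split 2 e (m+1), Hr_split 2 (m+1+d+e) (m+1),
    Hr_split 1 e (m+1), Hr_split 1 (m+1+d+e) (m+1)]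
  rw [← hPdef]
  simp only [hPe]
  have hFprod : ∏ j ∈ range (m+1), (((e:ℝ) + ↑j + 1)/(P + ↑j + 1))
      = (((e+(m+1)).choose (m+1) : ℕ) : ℝ)
          / ((((m+1+d+e)+(m+1)).choose (m+1) : ℕ) : ℝ) := by
    rw [prod_div_distrib, hPdef, ← choose_cast_prod e (m+1),
      ← choose_cast_prod (m+1+d+e) (m+1)]
    rw [mul_div_mul_right _ _ hfne]
  rw [hFprod]
  rw [sum_sub_distrib, sum_sub_distrib]
  rw [pow_succ]
  push_cast
  have hm1 : ((m:ℝ)+1) ≠ 0 := by positivity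
  field_simp
  ring
end

section
/- For nonnegative integers $p,q$ with $p\ge q\ge n$ and positive integer $n$, $\sum_{k=0}^n(-1)^k\binom{n}{k}\frac{\binom{q+k}{k}}{\binom{q-n+k}{k}}\frac{q}{q+k}H_{p+k}^{\langle4\rangle}=\frac{(-1)^n}{6n}\frac{\binom{p-q+n}{n}}{\binom{p+n}{n}\binom{q}{n}}\Big(S^3+2\big[H_{p-q+n}^{\langle3\rangle}-H_{p+n}^{\langle3\rangle}-H_{p-q}^{\langle3\rangle}+H_p^{\langle3\rangle}\big]-3S\big[H_{p-q+n}^{\langle2\rangle}-H_{p+n}^{\langle2\rangle}-H_{p-q}^{\langle2\rangle}+H_p^{\langle2\rangle}\big]\Big)$, where $S=H_{p-q+n}-H_{p+n}-H_{p-q}+H_p$. -/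
open Finset

/-! The two sides are reduced to the same sum `∑_{j<n} (-1)^j C(n-1,j) C(q+j,n) / (p+j+1)^4`.

On the left, the coefficient equals `C(q-1+k,n-1) / C(q-1,n-1)`, a polynomial of degree `n-1`
in `k`, so its alternating binomial sum vanishes; Abel summation then replaces `H⁽⁴⁾_{p+k}` by its
increments `1/(p+j+1)^4`, weighted by partial sums that have a closed form.

On the right, with `a = p - q`, the factor `C(a+n,n) / C(p+n,n)` is `Φ(a)` for
`Φ(x) = ∏_{i<n} (x+i+1)/(x+q+i+1)`. The bracketed harmonic differences are the power sums of the
poles and zeros of `Φ`, so the bracket times `Φ` is `Φ'''` (via the logarithmic derivative).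
Differentiating the partial fraction expansion `Φ(x) = 1 + ∑_j A_j/(x+q+j+1)` three times gives
`Φ''' = -6 ∑_j A_j/(x+q+j+1)^4`, and the residues `A_j` are explicit binomial products. -/

open Filter Topology

section PartialFractions

variable {K ι : Type*} [Field K] (s : Finset ι)

def invPowSum (c w : ι → K) (k : ℕ) (x : K) : K :=
  ∑ i ∈ s, c i / (x + w i) ^ k

def powerSumDiff (u v : ι → K) (k : ℕ) (x : K) : K :=
  invPowSum s 1 u k x - invPowSum s 1 v k x

def prodRatio (u v : ι → K) (x : K) : K :=
  ∏ i ∈ s, (x + u i) / (x + v i)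

variable [DecidableEq ι] (u v : ι → K)

def pfCoeff (j : ι) : K :=
  (∏ i ∈ s, (u i - v j)) / ∏ i ∈ s.erase j, (v i - v j)

variable {s} in
lemma pfCoeff_insert_of_ne {m j : ι} (hm : m ∉ s) (hmj : m ≠ j) :
    pfCoeff (insert m s) u v j = pfCoeff s u v j * (u m - v j) / (v m - v j) := by
  have hm' : m ∉ s.erase j := fun h => hm (mem_of_mem_erase h)
  rw [pfCoeff, pfCoeff, prod_insert hm, erase_insert_of_ne hmj, prod_insert hm',
    mul_div_mul_comm]
  ring

variable {s} in
lemma pfCoeff_insert_self {m : ι} (hm : m ∉ s) :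
    pfCoeff (insert m s) u v m = (u m - v m) * ∏ i ∈ s, (u i - v m) / (v i - v m) := by
  rw [pfCoeff, prod_insert hm, erase_insert hm, prod_div_distrib]
  ring

theorem prodRatio_eq_one_add_invPowSum_pfCoeff {x : K} (hv : Set.InjOn v s)
    (hx : ∀ i ∈ s, x + v i ≠ 0) :
    prodRatio s u v x = 1 + invPowSum s (pfCoeff s u v) v 1 x := by
  simp only [prodRatio, invPowSum, pow_one]
  induction s using Finset.induction_on generalizing x with
  | empty => simp
  | insert m s hm ih =>
    have hvs : Set.InjOn v s := hv.mono (subset_insert m s)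
    have hne : ∀ j ∈ s, v m - v j ≠ 0 := fun j hj =>
      sub_ne_zero.2 fun h => hm (hv (mem_insert_self m s) (mem_insert_of_mem hj) h ▸ hj)
    have hxm : x + v m ≠ 0 := hx m (mem_insert_self m s)
    have hxs : ∀ j ∈ s, x + v j ≠ 0 := fun j hj => hx j (mem_insert_of_mem hj)
    -- the new residue is read off from the old expansion evaluated at the new pole
    have hres : ∏ i ∈ s, (u i - v m) / (v i - v m)
        = 1 + ∑ j ∈ s, pfCoeff s u v j / (v j - v m) := by
      have := ih hvs (x := -v m) fun j hj h => hne j hj (by linear_combination -h)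
      simpa only [neg_add_eq_sub] using this
    have hcoef : ∑ j ∈ s, pfCoeff (insert m s) u v j / (x + v j)
        = ∑ j ∈ s, pfCoeff s u v j * (u m - v j) / (v m - v j) / (x + v j) :=
      sum_congr rfl fun j hj => by
        rw [pfCoeff_insert_of_ne u v hm (ne_of_mem_of_not_mem hj hm).symm]
    rw [prod_insert hm, sum_insert hm, ih hvs hxs, pfCoeff_insert_self u v hm, hres, hcoef]
    calc (x + u m) / (x + v m) * (1 + ∑ j ∈ s, pfCoeff s u v j / (x + v j))
        = (x + u m) / (x + v m) + ∑ j ∈ s,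
            (pfCoeff s u v j * (u m - v j) / (v m - v j) / (x + v j)
              + (u m - v m) / (x + v m) * (pfCoeff s u v j / (v j - v m))) := by
          rw [mul_add, mul_one, mul_sum]
          refine congrArg _ (sum_congr rfl fun j hj => ?_)
          have hmj := hne j hj
          have hjm : v j - v m ≠ 0 := fun h => hmj (by linear_combination -h)
          field_simp [hxs j hj]
          ring
      _ = _ := by
          rw [sum_add_distrib, ← mul_sum]
          field_simp
          ring

end PartialFractions

section Derivatives

variable {𝕜 : Type*} [NontriviallyNormedField 𝕜]

theorem Filter.EventuallyEq.eventuallyEq_of_hasDerivAt {E : Type*} [NormedAddCommGroup E]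
    [NormedSpace 𝕜 E] {f g f' g' : 𝕜 → E} {a : 𝕜} (h : f =ᶠ[𝓝 a] g)
    (hf : ∀ᶠ x in 𝓝 a, HasDerivAt f (f' x) x) (hg : ∀ᶠ x in 𝓝 a, HasDerivAt g (g' x) x) :
    f' =ᶠ[𝓝 a] g' := by
  filter_upwards [h.eventuallyEq_nhds, hf, hg] with x hx hfx hgx
  exact hfx.unique (hgx.congr_of_eventuallyEq hx)

lemma hasDerivAt_div_add_pow (c w : 𝕜) (k : ℕ) {x : 𝕜} (hx : x + w ≠ 0) :
    HasDerivAt (fun y => c / (y + w) ^ k) (-k * (c / (x + w) ^ (k + 1))) x := by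
  have h := ((((hasDerivAt_id x).add_const w).pow k).inv (pow_ne_zero k hx)).const_mul c
  simp only [div_eq_mul_inv]
  refine h.congr_deriv ?_
  rcases k with _ | k
  · simp
  · simp only [id, Pi.pow_apply, Nat.add_sub_cancel]
    field_simp
    ring

variable {ι : Type*} {s : Finset ι}

lemma hasDerivAt_invPowSum (c w : ι → 𝕜) (k : ℕ) {x : 𝕜} (hx : ∀ i ∈ s, x + w i ≠ 0) :
    HasDerivAt (invPowSum s c w k) (-k * invPowSum s c w (k + 1) x) x := by
  rw [invPowSum, mul_sum]
  exact HasDerivAt.fun_sum fun i hi => hasDerivAt_div_add_pow (c i) (w i) k (hx i hi)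

lemma hasDerivAt_powerSumDiff (u v : ι → 𝕜) (k : ℕ) {x : 𝕜}
    (hx : ∀ i ∈ s, x + u i ≠ 0 ∧ x + v i ≠ 0) :
    HasDerivAt (powerSumDiff s u v k) (-k * powerSumDiff s u v (k + 1) x) x := by
  rw [powerSumDiff, mul_sub]
  exact (hasDerivAt_invPowSum 1 u k fun i hi => (hx i hi).1).sub
    (hasDerivAt_invPowSum 1 v k fun i hi => (hx i hi).2)

lemma hasDerivAt_prodRatio [DecidableEq ι] (u v : ι → 𝕜) {x : 𝕜}
    (hx : ∀ i ∈ s, x + u i ≠ 0 ∧ x + v i ≠ 0) :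
    HasDerivAt (prodRatio s u v) (prodRatio s u v x * powerSumDiff s u v 1 x) x := by
  have h : HasDerivAt (prodRatio s u v)
      (∑ i ∈ s, (∏ j ∈ s.erase i, (x + u j) / (x + v j))
        • ((x + u i) / (x + v i) * (1 / (x + u i) - 1 / (x + v i)))) x :=
    HasDerivAt.fun_finsetProd fun i hi => by
      refine (((hasDerivAt_id x).add_const (u i)).div ((hasDerivAt_id x).add_const (v i))
        (hx i hi).2).congr_deriv ?_
      simp only [id]
      field_simp [(hx i hi).1, (hx i hi).2]
  refine h.congr_deriv ?_
  simp only [powerSumDiff, invPowSum, prodRatio, pow_one, Pi.one_apply, ← sum_sub_distrib,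
    mul_sum, smul_eq_mul, ← mul_assoc]
  refine sum_congr rfl fun i hi => ?_
  rw [mul_comm _ ((x + u i) / (x + v i)),
    mul_prod_erase s (fun j => (x + u j) / (x + v j)) hi]

/-- Both sides are the third derivative of `prodRatio`: on the left it is computed from
`prodRatio' = prodRatio * powerSumDiff 1`, on the right from the partial fraction expansion. -/
theorem powerSumDiff_cubic_mul_prodRatio [DecidableEq ι] (u v : ι → 𝕜) (hv : Set.InjOn v s)
    {x : 𝕜} (hx : ∀ i ∈ s, x + u i ≠ 0 ∧ x + v i ≠ 0) :
    (powerSumDiff s u v 1 x ^ 3 - 3 * powerSumDiff s u v 1 x * powerSumDiff s u v 2 x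
        + 2 * powerSumDiff s u v 3 x) * prodRatio s u v x
      = -6 * invPowSum s (pfCoeff s u v) v 4 x := by
  set P := powerSumDiff s u v
  set F := prodRatio s u v
  set R := invPowSum s (pfCoeff s u v) v
  have hU : ∀ᶠ y in 𝓝 x, ∀ i ∈ s, y + u i ≠ 0 ∧ y + v i ≠ 0 := by
    rw [eventually_all_finset]
    intro i hi
    have hc : ∀ c : 𝕜, Continuous fun y : 𝕜 => y + c := fun c =>
      continuous_id.add continuous_const
    exact ((hc (u i)).continuousAt.eventually_ne (hx i hi).1).and
      ((hc (v i)).continuousAt.eventually_ne (hx i hi).2)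
  have hR : ∀ k, ∀ᶠ y in 𝓝 x, HasDerivAt (R k) (-k * R (k + 1) y) y := fun k =>
    hU.mono fun y hy => hasDerivAt_invPowSum _ v k fun i hi => (hy i hi).2
  have h0 : F =ᶠ[𝓝 x] fun y => 1 + R 1 y := hU.mono fun y hy =>
    prodRatio_eq_one_add_invPowSum_pfCoeff s u v hv fun i hi => (hy i hi).2
  have h1 : (fun y => F y * P 1 y) =ᶠ[𝓝 x] fun y => -R 2 y :=
    h0.eventuallyEq_of_hasDerivAt (hU.mono fun y hy => hasDerivAt_prodRatio u v hy)
      ((hR 1).mono fun y hy => (hy.const_add 1).congr_deriv (by push_cast; ring))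
  have h2 : (fun y => F y * (P 1 y ^ 2 - P 2 y)) =ᶠ[𝓝 x] fun y => 2 * R 3 y :=
    h1.eventuallyEq_of_hasDerivAt
      (hU.mono fun y hy => ((hasDerivAt_prodRatio u v hy).mul
        (hasDerivAt_powerSumDiff u v 1 hy)).congr_deriv (by push_cast; ring))
      ((hR 2).mono fun y hy => hy.neg.congr_deriv (by push_cast; ring))
  have h3 : (fun y => F y * (P 1 y ^ 3 - 3 * P 1 y * P 2 y + 2 * P 3 y))
      =ᶠ[𝓝 x] fun y => -6 * R 4 y :=
    h2.eventuallyEq_of_hasDerivAt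
      (hU.mono fun y hy => ((hasDerivAt_prodRatio u v hy).mul
        (((hasDerivAt_powerSumDiff u v 1 hy).pow 2).sub
          (hasDerivAt_powerSumDiff u v 2 hy))).congr_deriv (by
            simp only [Pi.sub_apply, Pi.pow_apply]; push_cast; ring))
      ((hR 3).mono fun y hy => (hy.const_mul 2).congr_deriv (by push_cast; ring))
  rw [mul_comm]
  exact h3.eq_of_nhds

end Derivatives

lemma cast_descFactorial_eq_prod_range (m k : ℕ) (hk : k ≤ m + 1) :
    (m.descFactorial k : ℝ) = ∏ i ∈ range k, ((m : ℝ) - i) := by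
  rw [Nat.descFactorial_eq_prod_range, Nat.cast_prod]
  exact prod_congr rfl fun i hi => Nat.cast_sub (by grind)

lemma prod_range_erase_sub (N j : ℕ) (hj : j ≤ N) :
    ∏ i ∈ (range (N + 1)).erase j, ((i : ℝ) - j)
      = (-1) ^ j * j.factorial * (N - j).factorial := by
  obtain ⟨m, rfl⟩ := Nat.exists_eq_add_of_le hj
  induction m with
  | zero =>
    have h : ∏ i ∈ range j, ((i : ℝ) - j) = ∏ i ∈ range j, -((j : ℝ) - i) :=
      prod_congr rfl fun i _ => by ring
    rw [add_zero, range_add_one, erase_insert notMem_range_self, h, prod_neg, card_range,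
      ← cast_descFactorial_eq_prod_range j j j.le_succ, Nat.descFactorial_self]
    simp
  | succ m ih =>
    have hm : j + m + 1 ∉ (range (j + m + 1)).erase j := by simp
    rw [← add_assoc, range_add_one, erase_insert_of_ne (by omega), prod_insert hm,
      ih (by omega), show j + m + 1 - j = m + 1 by omega, Nat.add_sub_cancel_left,
      Nat.factorial_succ]
    push_cast
    ring

lemma pfCoeff_range (N q j : ℕ) (hj : j ≤ N) (hq : N ≤ q + j) :
    pfCoeff (range (N + 1)) (fun i => (i : ℝ) + 1) (fun i => (i : ℝ) + 1 + q) j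
      = (-1) ^ (N + 1 + j) * (N + 1) * N.choose j * (q + j).choose (N + 1) := by
  have hnum : ∏ i ∈ range (N + 1), ((i : ℝ) + 1 - (j + 1 + q))
      = (-1) ^ (N + 1) * (N + 1).factorial * (q + j).choose (N + 1) := by
    rw [mul_assoc, ← Nat.cast_mul, ← Nat.descFactorial_eq_factorial_mul_choose,
      cast_descFactorial_eq_prod_range _ _ (by omega)]
    rw [show (-1 : ℝ) ^ (N + 1) = (-1) ^ #(range (N + 1)) by rw [card_range], ← prod_neg]
    exact prod_congr rfl fun i _ => by push_cast; ring
  have hden : ∏ i ∈ (range (N + 1)).erase j, ((i : ℝ) + 1 + q - (j + 1 + q))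
      = (-1) ^ j * j.factorial * (N - j).factorial := by
    rw [← prod_range_erase_sub N j hj]
    exact prod_congr rfl fun i _ => by ring
  have hfac : (N.factorial : ℝ) = N.choose j * j.factorial * (N - j).factorial := by
    exact_mod_cast (Nat.choose_mul_factorial_mul_factorial hj).symm
  have hsign : (-1 : ℝ) ^ j * (-1) ^ j = 1 := by rw [← mul_pow]; norm_num
  rw [pfCoeff, hnum, hden, Nat.factorial_succ, Nat.cast_mul, hfac, pow_add]
  field_simp
  push_cast
  linear_combination ((N + 1 : ℝ) * N.choose j * (q + j).choose (N + 1) * (-1) ^ N) * hsign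

lemma cast_choose_add_eq_prod (a n : ℕ) :
    ((a + n).choose n : ℝ) = (∏ i ∈ range n, ((a : ℝ) + i + 1)) / n.factorial := by
  have h := congrArg (Nat.cast : ℕ → ℝ) (Nat.ascFactorial_eq_factorial_mul_choose a n)
  rw [Nat.ascFactorial_eq_prod_range] at h
  push_cast at h
  rw [eq_div_iff (by positivity), mul_comm, ← h]
  exact prod_congr rfl fun i _ => by ring

lemma Hr_add_s16 (l m n : ℕ) :
    Hr l (m + n) = Hr l m + ∑ i ∈ range n, 1 / ((m : ℝ) + i + 1) ^ l := by
  rw [Hr, Hr, sum_range_add]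
  congr 1
  exact sum_congr rfl fun i _ => by push_cast; ring_nf

lemma Hr_succ_sub (l m : ℕ) : Hr l (m + 1) - Hr l m = 1 / ((m : ℝ) + 1) ^ l := by
  rw [Hr, Hr, sum_range_succ, add_sub_cancel_left]

lemma powerSumDiff_range_eq_Hr (q a n l : ℕ) :
    powerSumDiff (range n) (fun i => (i : ℝ) + 1) (fun i => (i : ℝ) + 1 + q) l a
      = Hr l (a + n) - Hr l (q + a + n) - Hr l a + Hr l (q + a) := by
  have hu : ∀ i : ℕ, (a : ℝ) + (i + 1) = a + i + 1 := fun i => by ring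
  have hv : ∀ i : ℕ, (a : ℝ) + (i + 1 + q) = ((q + a : ℕ) : ℝ) + i + 1 := fun i => by
    push_cast; ring
  simp only [Hr_add_s16 l a, Hr_add_s16 l (q + a), powerSumDiff, invPowSum, Pi.one_apply, hu, hv]
  ring

lemma prodRatio_range_eq_choose_div_choose (q a n : ℕ) :
    prodRatio (range n) (fun i => (i : ℝ) + 1) (fun i => (i : ℝ) + 1 + q) a
      = ((a + n).choose n : ℝ) / (q + a + n).choose n := by
  have hu : ∀ i : ℕ, (a : ℝ) + (i + 1) = a + i + 1 := fun i => by ring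
  have hv : ∀ i : ℕ, (a : ℝ) + (i + 1 + q) = ((q + a : ℕ) : ℝ) + i + 1 := fun i => by
    push_cast; ring
  rw [cast_choose_add_eq_prod, cast_choose_add_eq_prod, prodRatio, prod_div_distrib]
  simp only [hu, hv]
  field_simp

theorem Hr_cubic_combination_eq (q a n : ℕ) (hn : 0 < n) (hqn : n ≤ q) :
    (-1 : ℝ) ^ n / (6 * n) *
        (((a + n).choose n : ℝ) / (((q + a + n).choose n : ℝ) * (q.choose n : ℝ))) *
        ((Hr 1 (a + n) - Hr 1 (q + a + n) - Hr 1 a + Hr 1 (q + a)) ^ 3 +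
          2 * (Hr 3 (a + n) - Hr 3 (q + a + n) - Hr 3 a + Hr 3 (q + a)) -
          3 * (Hr 1 (a + n) - Hr 1 (q + a + n) - Hr 1 a + Hr 1 (q + a)) *
            (Hr 2 (a + n) - Hr 2 (q + a + n) - Hr 2 a + Hr 2 (q + a)))
      = -(∑ j ∈ range n, (-1) ^ j * ((n - 1).choose j : ℝ) * ((q + j).choose n : ℝ)
          / (((q + a : ℕ) : ℝ) + j + 1) ^ 4) / (q.choose n : ℝ) := by
  obtain ⟨N, rfl⟩ : ∃ N, n = N + 1 := ⟨n - 1, by omega⟩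
  set u : ℕ → ℝ := fun i => i + 1
  set v : ℕ → ℝ := fun i => i + 1 + q
  have hx : ∀ i ∈ range (N + 1), (a : ℝ) + u i ≠ 0 ∧ (a : ℝ) + v i ≠ 0 :=
    fun i _ => ⟨by positivity, by positivity⟩
  have hv : Set.InjOn v (range (N + 1)) := fun i _ j _ h => by simpa [v] using h
  rw [Nat.add_sub_cancel]
  set S := ∑ j ∈ range (N + 1), (-1) ^ j * (N.choose j : ℝ) * ((q + j).choose (N + 1) : ℝ)
    / (((q + a : ℕ) : ℝ) + j + 1) ^ 4
  have hR : invPowSum (range (N + 1)) (pfCoeff (range (N + 1)) u v) v 4 a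
      = (-1) ^ (N + 1) * (N + 1) * S := by
    rw [invPowSum, mul_sum]
    refine sum_congr rfl fun j hj => ?_
    rw [pfCoeff_range N q j (by grind) (by omega), pow_add]
    push_cast
    ring
  have key := powerSumDiff_cubic_mul_prodRatio u v hv hx
  rw [hR, powerSumDiff_range_eq_Hr, powerSumDiff_range_eq_Hr, powerSumDiff_range_eq_Hr,
    prodRatio_range_eq_choose_div_choose] at key
  have hsign : ((-1 : ℝ) ^ (N + 1)) ^ 2 = 1 := by rw [← pow_mul, pow_mul']; simp
  have hC : ((q.choose (N + 1) : ℕ) : ℝ) ≠ 0 := by exact_mod_cast (Nat.choose_pos hqn).ne'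
  push_cast at key ⊢
  field_simp
  linear_combination (-1 : ℝ) ^ (N + 1) * key - 6 * (N + 1) * S * hsign

lemma choose_div_choose_mul_div (Q N k : ℕ) (hNQ : N ≤ Q) :
    ((Q + 1 + k).choose k : ℝ) / (Q - N + k).choose k * (((Q : ℝ) + 1) / ((Q : ℝ) + 1 + k))
      = (Q + k).choose N / Q.choose N := by
  have h1 := Nat.add_one_mul_choose_eq (Q + k) Q
  have h2 := Nat.choose_mul (n := Q + k) (k := Q) hNQ
  rw [show Q + k + 1 = Q + 1 + k by omega, Nat.choose_symm_add, Nat.choose_symm_add] at h1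
  rw [show Q + k - N = Q - N + k by omega, Nat.choose_symm_add, Nat.choose_symm_add] at h2
  have hE : ((Q - N + k).choose k : ℝ) ≠ 0 := by exact_mod_cast (Nat.choose_pos (by omega)).ne'
  have hC : (Q.choose N : ℝ) ≠ 0 := by exact_mod_cast (Nat.choose_pos hNQ).ne'
  rw [div_mul_div_comm, div_eq_div_iff (by positivity) hC]
  have h1' : ((Q : ℝ) + 1 + k) * (Q + k).choose k = (Q + 1 + k).choose k * (Q + 1) := by
    exact_mod_cast h1
  have h2' : ((Q + k).choose k : ℝ) * Q.choose N = (Q + k).choose N * (Q - N + k).choose k := by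
    exact_mod_cast h2
  linear_combination ((Q : ℝ) + 1 + k) * h2' - (Q.choose N : ℝ) * h1'

lemma mul_sum_range_alternating_choose_mul_choose (N Q : ℕ) (hNQ : N ≤ Q) (j : ℕ)
    (hj : j ≤ N + 1) :
    ((Q : ℝ) + 1) * ∑ k ∈ range (j + 1), (-1) ^ k * ((N + 1).choose k : ℝ) * (Q + k).choose N
      = (N + 1) * ((-1) ^ j * (N.choose j : ℝ) * (Q + 1 + j).choose (N + 1)) := by
  induction j with
  | zero =>
    have h : ((Q : ℝ) + 1) * Q.choose N = (Q + 1).choose (N + 1) * (N + 1) := by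
      exact_mod_cast Nat.add_one_mul_choose_eq Q N
    simp only [zero_add, sum_range_one, pow_zero, Nat.choose_zero_right, add_zero]
    push_cast
    linear_combination h
  | succ j ih =>
    have e1 : ((N : ℝ) + 1) * N.choose j = (N + 1).choose (j + 1) * (j + 1) := by
      exact_mod_cast Nat.add_one_mul_choose_eq N j
    have e2 : (N.choose (j + 1) : ℝ) * (j + 1) = N.choose j * (N - j) := by
      have := Nat.choose_succ_right_eq N j
      rw [← Nat.cast_sub (by omega)]
      exact_mod_cast this
    have e3 : ((Q + 1 + j).choose (N + 1) : ℝ) * (N + 1)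
        = (Q + 1 + j).choose N * (Q + 1 + j - N) := by
      have := Nat.choose_succ_right_eq (Q + 1 + j) N
      rw [show (Q : ℝ) + 1 + j - N = ((Q + 1 + j - N : ℕ) : ℝ) by
        push_cast [show N ≤ Q + 1 + j by omega]; ring]
      exact_mod_cast this
    have e4 : ((Q + 1 + (j + 1)).choose (N + 1) : ℝ)
        = (Q + 1 + j).choose N + (Q + 1 + j).choose (N + 1) := by
      exact_mod_cast Nat.choose_succ_succ (Q + 1 + j) N
    rw [sum_range_succ, mul_add, ih (by omega), show Q + (j + 1) = Q + 1 + j by omega]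
    refine mul_left_cancel₀ (show (j : ℝ) + 1 ≠ 0 by positivity) ?_
    linear_combination (-1 : ℝ) ^ j *
      (((N : ℝ) + 1) * ((Q + 1 + j).choose N + (Q + 1 + j).choose (N + 1)) * e2
        + ((Q : ℝ) + 1) * (Q + 1 + j).choose N * e1 + ((N : ℝ) + 1) * N.choose j * e3
        + ((j : ℝ) + 1) * (N + 1) * N.choose (j + 1) * e4)

theorem sum_alternating_choose_mul_choose_mul (N Q : ℕ) (hNQ : N ≤ Q) (f : ℕ → ℝ) :
    ∑ k ∈ range (N + 1 + 1), (-1) ^ k * ((N + 1).choose k : ℝ) * (Q + k).choose N * f k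
      = -((N + 1) / (Q + 1) * ∑ j ∈ range (N + 1),
          (-1) ^ j * (N.choose j : ℝ) * (Q + 1 + j).choose (N + 1) * (f (j + 1) - f j)) := by
  set t : ℕ → ℝ := fun k => (-1) ^ k * ((N + 1).choose k : ℝ) * (Q + k).choose N
  have hT : ∀ j ≤ N + 1, ∑ k ∈ range (j + 1), t k
      = (N + 1) / (Q + 1) * ((-1) ^ j * (N.choose j : ℝ) * (Q + 1 + j).choose (N + 1)) := by
    intro j hj
    rw [div_mul_eq_mul_div, eq_div_iff (by positivity), mul_comm]
    exact mul_sum_range_alternating_choose_mul_choose N Q hNQ j hj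
  have hvanish : ∑ k ∈ range (N + 1 + 1), t k = 0 := by
    rw [hT (N + 1) le_rfl, Nat.choose_succ_self]
    simp
  have h := sum_range_by_parts f t (N + 1 + 1)
  simp only [smul_eq_mul, hvanish, mul_zero, zero_sub, Nat.add_sub_cancel] at h
  rw [sum_congr rfl fun k _ => mul_comm (t k) (f k), h, mul_sum, ← sum_neg_distrib,
    ← sum_neg_distrib]
  refine sum_congr rfl fun j hj => ?_
  rw [hT j (by grind)]
  ring

theorem sum_choose_ratio_mul_Hr_four_eq (p q n : ℕ) (hn : 0 < n) (hqn : n ≤ q) :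
    ∑ k ∈ range (n + 1), (-1 : ℝ) ^ k * (n.choose k : ℝ) *
        (((q + k).choose k : ℝ) / ((q - n + k).choose k : ℝ)) *
        ((q : ℝ) / ((q : ℝ) + k)) * Hr 4 (p + k)
      = -(∑ j ∈ range n, (-1) ^ j * ((n - 1).choose j : ℝ) * ((q + j).choose n : ℝ)
          / ((p : ℝ) + j + 1) ^ 4) / (q.choose n : ℝ) := by
  obtain ⟨N, rfl⟩ : ∃ N, n = N + 1 := ⟨n - 1, by omega⟩
  obtain ⟨Q, rfl⟩ : ∃ Q, q = Q + 1 := ⟨q - 1, by omega⟩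
  have hNQ : N ≤ Q := by omega
  have hC : (Q.choose N : ℝ) ≠ 0 := by exact_mod_cast (Nat.choose_pos hNQ).ne'
  have hpascal : ((Q : ℝ) + 1) * Q.choose N = (Q + 1).choose (N + 1) * (N + 1) := by
    exact_mod_cast Nat.add_one_mul_choose_eq Q N
  calc _ = (Q.choose N : ℝ)⁻¹ * ∑ k ∈ range (N + 1 + 1),
          (-1) ^ k * ((N + 1).choose k : ℝ) * (Q + k).choose N * Hr 4 (p + k) := by
        rw [mul_sum]
        refine sum_congr rfl fun k _ => ?_
        rw [Nat.add_sub_add_right, Nat.cast_add_one]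
        linear_combination ((-1) ^ k * ((N + 1).choose k : ℝ) * Hr 4 (p + k))
          * choose_div_choose_mul_div Q N k hNQ
    _ = _ := by
        rw [sum_alternating_choose_mul_choose_mul N Q hNQ]
        simp only [← add_assoc, Hr_succ_sub, Nat.add_sub_cancel]
        push_cast
        simp only [mul_one_div]
        set S := ∑ j ∈ range (N + 1),
          (-1) ^ j * (N.choose j : ℝ) * ((Q + 1 + j).choose (N + 1) : ℝ) / ((p : ℝ) + j + 1) ^ 4
        have hC' : ((Q + 1).choose (N + 1) : ℝ) ≠ 0 := by
          exact_mod_cast (Nat.choose_pos (by omega)).ne'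
        field_simp
        linear_combination S * hpascal

theorem stmt16 (p q n : ℕ) (hn : 0 < n) (hqn : n ≤ q) (hpq : q ≤ p) :
    ∑ k ∈ Finset.range (n + 1), (-1 : ℝ) ^ k * (n.choose k : ℝ) *
        (((q + k).choose k : ℝ) / ((q - n + k).choose k : ℝ)) *
        ((q : ℝ) / ((q : ℝ) + k)) * Hr 4 (p + k) =
      (-1 : ℝ) ^ n / (6 * n) *
        (((p - q + n).choose n : ℝ) / (((p + n).choose n : ℝ) * (q.choose n : ℝ))) *
        ((Hr 1 (p - q + n) - Hr 1 (p + n) - Hr 1 (p - q) + Hr 1 p) ^ 3 +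
          2 * (Hr 3 (p - q + n) - Hr 3 (p + n) - Hr 3 (p - q) + Hr 3 p) -
          3 * (Hr 1 (p - q + n) - Hr 1 (p + n) - Hr 1 (p - q) + Hr 1 p) *
            (Hr 2 (p - q + n) - Hr 2 (p + n) - Hr 2 (p - q) + Hr 2 p)) := by
  obtain ⟨a, rfl⟩ := Nat.exists_eq_add_of_le hpq
  rw [Nat.add_sub_cancel_left, sum_choose_ratio_mul_Hr_four_eq (q + a) q n hn hqn,
    Hr_cubic_combination_eq q a n hn hqn]
end
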